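/- arXiv:2206.08925 — 2 statements merged into one kernel-verified Lean document; each statement's English description precedes it below -/
import Mathlib

section
/- Let K be a field of characteristic 0 and (λ,μ) a bipartition of n. The B_n-orbit set H_{(λ,μ)} is non-empty if and only if λ₁ = λ₂ = ⋯ = λ_{len(μ)+1} (with the convention λ_j = 0 for j > len(λ)). -/
namespace SpechtBn

/-- `f` lists the parts of a partition (0-indexed: part `j+1` of the paper is `f j`),
with at most `n` parts. -/
def IsPartitionFun (n : ℕ) (f : ℕ → ℕ) : Prop :=
  Antitone f ∧ ∀ i, n ≤ i → f i = 0

/-- the pair of part functions `(f, g)` forms a bipartition of `n`. -/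
def IsBP (n : ℕ) (f g : ℕ → ℕ) : Prop :=
  IsPartitionFun n f ∧ IsPartitionFun n g ∧ (∑ i ∈ Finset.range n, (f i + g i)) = n

/-- A bipartition of `n`, given by the 0-indexed part functions of its two components. -/
structure Bipartition (n : ℕ) where
  l : ℕ → ℕ
  m : ℕ → ℕ
  isBP : IsBP n l m

/-- Bidominance on pairs of part functions: `(l₁,m₁) ⊴ (l₂,m₂)`. -/
def BidomFun (l₁ m₁ l₂ m₂ : ℕ → ℕ) : Prop :=
  (∀ k, ∑ j ∈ Finset.range k, (l₁ j + m₁ j) ≤ ∑ j ∈ Finset.range k, (l₂ j + m₂ j)) ∧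
  (∀ k, (∑ j ∈ Finset.range k, (l₁ j + m₁ j)) + l₁ k
      ≤ (∑ j ∈ Finset.range k, (l₂ j + m₂ j)) + l₂ k)

/-- `Bidom q p` : the bipartition `q` is bidominated by `p`, i.e. `q ⊴ p`. -/
def Bidom {n : ℕ} (q p : Bipartition n) : Prop := BidomFun q.l q.m p.l p.m

/-- Dominance order on part functions: `DomFun f g` means `f ⊴ g`. -/
def DomFun (f g : ℕ → ℕ) : Prop :=
  ∀ k, ∑ j ∈ Finset.range k, f j ≤ ∑ j ∈ Finset.range k, g j

/-- `g` covers `f` in the dominance order on partitions (of the same size, with ≤ `n` parts). -/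
def DomCovers (n : ℕ) (g f : ℕ → ℕ) : Prop :=
  IsPartitionFun n g ∧ IsPartitionFun n f ∧ DomFun f g ∧ f ≠ g ∧
  ∀ h : ℕ → ℕ, IsPartitionFun n h →
    (∑ j ∈ Finset.range n, h j) = (∑ j ∈ Finset.range n, f j) →
    DomFun f h → DomFun h g → h = f ∨ h = g

/-- `p` covers `q` in the bidominance order on bipartitions of `n`. -/
def BPCovers {n : ℕ} (p q : Bipartition n) : Prop :=
  Bidom q p ∧ q ≠ p ∧ ∀ r : Bipartition n, Bidom q r → Bidom r p → r = q ∨ r = p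

/-- number of positive parts of `f` (among the first `n`). -/
def lenF (n : ℕ) (f : ℕ → ℕ) : ℕ := ((Finset.range n).filter fun i => 1 ≤ f i).card

/-- the cells `(row, column)` of the Young diagram of `f` (0-indexed). -/
def cellsF (n : ℕ) (f : ℕ → ℕ) : Finset (ℕ × ℕ) :=
  (Finset.range n ×ˢ Finset.range n).filter fun c => c.2 < f c.1

/-- ordered pairs of cells lying in the same column, the first strictly above the second. -/
def colPairs (n : ℕ) (f : ℕ → ℕ) : Finset ((ℕ × ℕ) × (ℕ × ℕ)) :=
  ((cellsF n f) ×ˢ (cellsF n f)).filter fun q => q.1.2 = q.2.2 ∧ q.1.1 < q.2.1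

/-- A bitableau of shape `(f,g)`: a filling of the pair of Young diagrams with the
numbers `1,…,n` (here: the elements of `Fin n`), each used exactly once. -/
structure Bitableau (n : ℕ) (f g : ℕ → ℕ) where
  left : ℕ × ℕ → Fin n
  right : ℕ × ℕ → Fin n
  bij : ∀ k : Fin n, ∃! c : (ℕ × ℕ) ⊕ (ℕ × ℕ),
      Sum.elim (fun c => c ∈ cellsF n f ∧ left c = k)
               (fun c => c ∈ cellsF n g ∧ right c = k) c

/-- A tableau of shape `f`: a filling of the Young diagram of `f` with the elements
of `Fin n`, each used exactly once. -/
structure Tableau (n : ℕ) (f : ℕ → ℕ) where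
  entry : ℕ × ℕ → Fin n
  bij : ∀ k : Fin n, ∃! c : ℕ × ℕ, c ∈ cellsF n f ∧ entry c = k

open MvPolynomial in
/-- The `B_n`-Specht polynomial of a bitableau. -/
noncomputable def speB (n : ℕ) (K : Type*) [CommRing K] {f g : ℕ → ℕ}
    (bt : Bitableau n f g) : MvPolynomial (Fin n) K :=
  (∏ q ∈ colPairs n f, (X (bt.left q.1) ^ 2 - X (bt.left q.2) ^ 2)) *
  (∏ q ∈ colPairs n g, (X (bt.right q.1) ^ 2 - X (bt.right q.2) ^ 2)) *
  ∏ c ∈ cellsF n g, X (bt.right c)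

open MvPolynomial in
/-- The `S_n`-Specht polynomial of a tableau. -/
noncomputable def speSn (n : ℕ) (K : Type*) [CommRing K] {f : ℕ → ℕ}
    (U : Tableau n f) : MvPolynomial (Fin n) K :=
  ∏ q ∈ colPairs n f, (X (U.entry q.1) - X (U.entry q.2))

/-- The set of all `B_n`-Specht polynomials of shape `(f,g)`. -/
def spechtSet (n : ℕ) (K : Type*) [CommRing K] (f g : ℕ → ℕ) :
    Set (MvPolynomial (Fin n) K) :=
  {P | ∃ bt : Bitableau n f g, P = speB n K bt}

/-- The `B_n`-Specht ideal of shape `(f,g)`. -/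
noncomputable def spechtIdeal (n : ℕ) (K : Type*) [CommRing K] (f g : ℕ → ℕ) :
    Ideal (MvPolynomial (Fin n) K) :=
  Ideal.span (spechtSet n K f g)

/-- The `B_n`-Specht variety of shape `(f,g)`. -/
def spechtVariety (n : ℕ) (K : Type*) [CommRing K] (f g : ℕ → ℕ) : Set (Fin n → K) :=
  {z | ∀ P ∈ spechtIdeal n K f g, MvPolynomial.eval z P = 0}

/-- The `S_n`-orbit type of `z`: the multiplicities of the distinct values occurring among
the coordinates of `z`, sorted decreasingly (0-indexed part function). -/
noncomputable def snType {K : Type*} {n : ℕ} (z : Fin n → K) : ℕ → ℕ := fun j =>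
  letI := Classical.decEq K
  (((Finset.univ.image z).val.map fun v =>
      (Finset.univ.filter fun i => z i = v).card).sort (· ≤ ·)).reverse.getD j 0

/-- The index `j-1` (0-indexed) used in the definition of the `t`-cut. -/
def cutIdx (n : ℕ) (f : ℕ → ℕ) (t : ℕ) : ℕ :=
  ((Finset.range n).filter fun i => t ≤ f i ∧ 1 ≤ f i).card

/-- First component `ρ` of the `t`-cut of `f`. -/
def cutFst (n : ℕ) (f : ℕ → ℕ) (t : ℕ) : ℕ → ℕ :=
  fun i => if i < cutIdx n f t then t else f i

/-- Second component `σ` of the `t`-cut of `f`. -/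
def cutSnd (n : ℕ) (f : ℕ → ℕ) (t : ℕ) : ℕ → ℕ :=
  fun i => if i < cutIdx n f t then f i - t else 0

/-- the number of zero coordinates of `z`. -/
noncomputable def zeroCount {K : Type*} [Zero K] {n : ℕ} (z : Fin n → K) : ℕ :=
  letI := Classical.decEq K
  (Finset.univ.filter fun i => z i = 0).card

/-- First component of the `B_n`-orbit type `Ω(z) = cut(Λ(z²), t_z)`. -/
noncomputable def omegaFst {K : Type*} [CommRing K] {n : ℕ} (z : Fin n → K) : ℕ → ℕ :=
  cutFst n (snType fun i => z i ^ 2) (zeroCount z)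

/-- Second component of the `B_n`-orbit type `Ω(z) = cut(Λ(z²), t_z)`. -/
noncomputable def omegaSnd {K : Type*} [CommRing K] {n : ℕ} (z : Fin n → K) : ℕ → ℕ :=
  cutSnd n (snType fun i => z i ^ 2) (zeroCount z)

/-- The `B_n`-orbit set `H_{(f,g)}`. -/
def orbitSet (n : ℕ) (K : Type*) [CommRing K] (f g : ℕ → ℕ) : Set (Fin n → K) :=
  {z | omegaFst z = f ∧ omegaSnd z = g}

/-- `τ` is a vector of signs. -/
def IsSigns {n : ℕ} {K : Type*} [One K] [Neg K] (τ : Fin n → K) : Prop :=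
  ∀ i, τ i = 1 ∨ τ i = -1

/-- The action of the element `(τ, ρ)` of the hyperoctahedral group `B_n` on polynomials,
sending `x_i` to `τ(ρ(i))·x_{ρ(i)}`. -/
noncomputable def bnAct (n : ℕ) (K : Type*) [CommRing K] (τ : Fin n → K)
    (ρ : Equiv.Perm (Fin n)) :
    MvPolynomial (Fin n) K →ₐ[K] MvPolynomial (Fin n) K :=
  MvPolynomial.aeval fun i => MvPolynomial.C (τ (ρ i)) * MvPolynomial.X (ρ i)

/-- `I` is a `B_n`-invariant ideal. -/
def BnInvariantIdeal (n : ℕ) (K : Type*) [CommRing K]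
    (I : Ideal (MvPolynomial (Fin n) K)) : Prop :=
  ∀ P ∈ I, ∀ τ : Fin n → K, IsSigns τ → ∀ ρ : Equiv.Perm (Fin n), bnAct n K τ ρ P ∈ I

/-- `P` is a `B_n`-invariant polynomial. -/
def BnInvariantPoly (n : ℕ) (K : Type*) [CommRing K] (P : MvPolynomial (Fin n) K) : Prop :=
  ∀ τ : Fin n → K, IsSigns τ → ∀ ρ : Equiv.Perm (Fin n), bnAct n K τ ρ P = P

/-- the decreasing rearrangement of a multiset of naturals, as a 0-indexed part function. -/
def sortedDesc (M : Multiset ℕ) : ℕ → ℕ := fun j => ((M.sort (· ≤ ·)).reverse).getD j 0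

/-- the conjugate (transpose) of the part function `f` (with at most `n` parts). -/
def conjF (n : ℕ) (f : ℕ → ℕ) : ℕ → ℕ :=
  fun c => ((Finset.range n).filter fun i => c < f i).card

/-- indices with positive even exponent in the monomial with exponent vector `e`. -/
def evenSupp {n : ℕ} (e : Fin n →₀ ℕ) : Finset (Fin n) :=
  Finset.univ.filter fun i => e i ≠ 0 ∧ Even (e i)

/-- indices with odd exponent in the monomial with exponent vector `e`. -/
def oddSupp {n : ℕ} (e : Fin n →₀ ℕ) : Finset (Fin n) :=
  Finset.univ.filter fun i => Odd (e i)

/-- `d₁ = Σ_{i∈I₁} k_i` for the monomial with exponent vector `e`. -/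
def d1F {n : ℕ} (e : Fin n →₀ ℕ) : ℕ := ∑ i ∈ evenSupp e, e i / 2

/-- `d₂ = Σ_{i∈I₂} r_i` for the monomial with exponent vector `e`. -/
def d2F {n : ℕ} (e : Fin n →₀ ℕ) : ℕ := ∑ i ∈ oddSupp e, e i / 2

/-- first component of the bipartition `Γ(m)` of the monomial with exponent vector `e`:
`(λ₁+1,…,λ_ℓ+1, 1,…,1)` with `n−(ℓ+s+d₁+d₂)` trailing ones. -/
def gammaFst {n : ℕ} (e : Fin n →₀ ℕ) : ℕ → ℕ := fun j =>
  if j < n - ((oddSupp e).card + d1F e + d2F e) then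
    max (sortedDesc ((evenSupp e).val.map fun i => e i / 2 + 1) j) 1
  else 0

/-- second component of the bipartition `Γ(m)`: `(μ₁+1,…,μ_s+1)`. -/
def gammaSnd {n : ℕ} (e : Fin n →₀ ℕ) : ℕ → ℕ :=
  sortedDesc ((oddSupp e).val.map fun i => e i / 2 + 1)

/-- first component of `Γ*(m)`, the conjugate of the first component of `Γ(m)`. -/
def gammaStarFst {n : ℕ} (e : Fin n →₀ ℕ) : ℕ → ℕ := conjF n (gammaFst e)

/-- second component of `Γ*(m)`, the conjugate of the second component of `Γ(m)`. -/
def gammaStarSnd {n : ℕ} (e : Fin n →₀ ℕ) : ℕ → ℕ := conjF n (gammaSnd e)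

/-- position, in the glued tableau, of column `j` of the left diagram: columns are sorted
by weakly decreasing height, left-diagram columns first among equal heights. -/
def gluePosL (n : ℕ) (f g : ℕ → ℕ) (j : ℕ) : ℕ :=
  j + ((Finset.range n).filter fun k => conjF n f j < conjF n g k).card

/-- position, in the glued tableau, of column `k` of the right diagram. -/
def gluePosR (n : ℕ) (f g : ℕ → ℕ) (k : ℕ) : ℕ :=
  k + ((Finset.range n).filter fun j => conjF n g k ≤ conjF n f j).card

/-- `U` is the glueing `T ⊎ S` of the bitableau `(T,S)`. -/
def IsGlue {n : ℕ} {f g : ℕ → ℕ} (bt : Bitableau n f g)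
    (U : Tableau n (fun i => f i + g i)) : Prop :=
  (∀ c ∈ cellsF n f, U.entry (c.1, gluePosL n f g c.2) = bt.left c) ∧
  (∀ c ∈ cellsF n g, U.entry (c.1, gluePosR n f g c.2) = bt.right c)

/-- extension of a finitely-presented part function to `ℕ → ℕ`. -/
def extendF {n : ℕ} (h : Fin n → Fin (n + 1)) : ℕ → ℕ :=
  fun i => if hi : i < n then (h ⟨i, hi⟩ : ℕ) else 0

/-- `Σ_{(ϑ,ω)∈BP_n, (ϑ,ω) ⋬ (lam,mu)} s_{ϑ,ω}²`, where `s_{ϑ,ω}` is the dimension of the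
span of the Specht polynomials of shape `(ϑ,ω)`. -/
noncomputable def sBound (n : ℕ) (K : Type*) [Field K] (lam mu : ℕ → ℕ) : ℕ :=
  letI : DecidablePred (fun q : (Fin n → Fin (n + 1)) × (Fin n → Fin (n + 1)) =>
      IsBP n (extendF q.1) (extendF q.2) ∧
        ¬ BidomFun (extendF q.1) (extendF q.2) lam mu) :=
    Classical.decPred _
  ∑ q ∈ Finset.univ.filter (fun q : (Fin n → Fin (n + 1)) × (Fin n → Fin (n + 1)) =>
      IsBP n (extendF q.1) (extendF q.2) ∧
        ¬ BidomFun (extendF q.1) (extendF q.2) lam mu),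
    (Module.finrank K (Submodule.span K (spechtSet n K (extendF q.1) (extendF q.2)))) ^ 2

end SpechtBn

section OrbitSetProof

open Finset SpechtBn

/-- membership in a down-closed filtered subset of `range n` is an initial segment. -/
private lemma initseg_card_iff {n : ℕ} {P : ℕ → Prop} [DecidablePred P]
    (hP : ∀ ⦃i j : ℕ⦄, i ≤ j → P j → P i) (k : ℕ) :
    k < ((Finset.range n).filter P).card ↔ k < n ∧ P k := by
  constructor
  · intro hk
    by_contra h
    have hsub : (Finset.range n).filter P ⊆ Finset.range k := by
      intro i hi
      simp only [mem_filter, mem_range] at hi ⊢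
      by_contra hik
      push_neg at hik
      exact h ⟨lt_of_le_of_lt hik hi.1, hP hik hi.2⟩
    have := card_le_card hsub
    rw [card_range] at this
    omega
  · rintro ⟨hkn, hPk⟩
    have hsub : Finset.range (k + 1) ⊆ (Finset.range n).filter P := by
      intro i hi
      simp only [mem_range] at hi
      simp only [mem_filter, mem_range]
      exact ⟨by omega, hP (by omega) hPk⟩
    have := card_le_card hsub
    rw [card_range] at this
    omega

private lemma antitone_getD_of_sorted {l : List ℕ} (h : l.Pairwise (fun a b => b ≤ a)) :
    Antitone (fun j => l.getD j 0) := by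
  intro i j hij
  simp only
  by_cases hj : j < l.length
  · have hi : i < l.length := lt_of_le_of_lt hij hj
    rw [List.getD_eq_getElem _ _ hi, List.getD_eq_getElem _ _ hj]
    rcases eq_or_lt_of_le hij with rfl | h'
    · exact le_refl _
    · have := h.rel_get_of_lt (a := ⟨i, hi⟩) (b := ⟨j, hj⟩) h'
      simpa using this
  · rw [List.getD_eq_default _ _ (by omega)]
    exact Nat.zero_le _

private lemma sorted_desc_eq {M : Multiset ℕ} {f : ℕ → ℕ} {c : ℕ} (hf : Antitone f)
    (hM : M = Multiset.map f (Multiset.range c)) (hzero : ∀ j, c ≤ j → f j = 0) (j : ℕ) :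
    ((M.sort (· ≤ ·)).reverse).getD j 0 = f j := by
  have hlist : (M.sort (· ≤ ·)).reverse = (List.range c).map f := by
    apply (fun hp h1 h2 => List.Perm.eq_of_pairwise (le := fun a b : ℕ => b ≤ a)
      (fun a b _ _ h h' => le_antisymm h' h) h1 h2 hp)
    · have h1 : (M.sort (· ≤ ·)).reverse.Perm (M.sort (· ≤ ·)) := List.reverse_perm _
      refine h1.trans ?_
      rw [← Multiset.coe_eq_coe, Multiset.sort_eq, hM]
      rfl
    · exact List.pairwise_reverse.2 (M.pairwise_sort _)
    · rw [List.pairwise_map]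
      exact (List.pairwise_lt_range (n := c)).imp fun hab => hf (le_of_lt hab)
  rw [hlist]
  by_cases hj : j < c
  · rw [List.getD_eq_getElem _ _ (by simpa using hj)]
    simp
  · rw [List.getD_eq_default _ _ (by simpa using hj)]
    exact (hzero j (by omega)).symm

/-- the multiset of multiplicities of the values of `z`. -/
private def multMS {K : Type*} [DecidableEq K] {n : ℕ} (z : Fin n → K) : Multiset ℕ :=
  (Finset.univ.image z).val.map fun v => (Finset.univ.filter fun i => z i = v).card

private lemma snType_eq {K : Type*} [DecidableEq K] {n : ℕ} (z : Fin n → K) (j : ℕ) :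
    snType z j = ((multMS z).sort (· ≤ ·)).reverse.getD j 0 := by
  unfold snType multMS
  congr!

private lemma zeroCount_eq {K : Type*} [Zero K] [DecidableEq K] {n : ℕ} (z : Fin n → K) :
    zeroCount z = (Finset.univ.filter fun i => z i = 0).card := by
  unfold zeroCount
  congr!

private lemma multMS_card_le {K : Type*} [DecidableEq K] {n : ℕ} (z : Fin n → K) :
    (multMS z).card ≤ n := by
  unfold multMS
  rw [Multiset.card_map]
  show (Finset.univ.image z).card ≤ n
  exact le_trans Finset.card_image_le (by simp)

private lemma mem_multMS {K : Type*} [DecidableEq K] {n : ℕ} (z : Fin n → K) (i₀ : Fin n) :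
    (Finset.univ.filter fun i => z i = z i₀).card ∈ multMS z := by
  unfold multMS
  exact Multiset.mem_map.2 ⟨z i₀, Finset.mem_image.2 ⟨i₀, Finset.mem_univ _, rfl⟩, rfl⟩

private lemma card_filter_fin_val {n : ℕ} (P : ℕ → Prop) [DecidablePred P] :
    ((Finset.univ : Finset (Fin n)).filter fun i => P i.val).card
      = ((Finset.range n).filter P).card := by
  apply Finset.card_bij (fun i _ => i.val)
  · intro a ha
    simp only [mem_filter, mem_univ, true_and] at ha
    simp [a.isLt, ha]
  · intro a ha b hb h
    exact Fin.val_injective h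
  · intro b hb
    simp only [mem_filter, mem_range] at hb
    exact ⟨⟨b, hb.1⟩, by simp [hb.2], rfl⟩

private lemma snType_antitone {K : Type*} [DecidableEq K] {n : ℕ} (z : Fin n → K) :
    Antitone (snType z) := by
  have h : snType z = fun j => ((multMS z).sort (· ≤ ·)).reverse.getD j 0 :=
    funext (snType_eq z)
  rw [h]
  exact antitone_getD_of_sorted (List.pairwise_reverse.2 ((multMS z).pairwise_sort _))

private lemma snType_zero {K : Type*} [DecidableEq K] {n : ℕ} (z : Fin n → K) {j : ℕ}
    (hj : n ≤ j) : snType z j = 0 := by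
  rw [snType_eq]
  apply List.getD_eq_default
  rw [List.length_reverse, Multiset.length_sort]
  exact le_trans (multMS_card_le z) hj

private lemma snType_exists {K : Type*} [DecidableEq K] {n : ℕ} (z : Fin n → K) (i₀ : Fin n) :
    ∃ j, j < n ∧ snType z j = (Finset.univ.filter fun i => z i = z i₀).card := by
  have hm : _ ∈ multMS z := mem_multMS z i₀
  have hm2 : ((Finset.univ.filter fun i => z i = z i₀).card)
      ∈ ((multMS z).sort (· ≤ ·)).reverse := by
    rw [List.mem_reverse, Multiset.mem_sort]
    exact hm
  obtain ⟨j, hj, hget⟩ := List.getElem_of_mem hm2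
  have hlen : ((multMS z).sort (· ≤ ·)).reverse.length ≤ n := by
    rw [List.length_reverse, Multiset.length_sort]
    exact multMS_card_le z
  exact ⟨j, by omega, by rw [snType_eq, List.getD_eq_getElem _ _ hj, hget]⟩

private lemma lenF_iff {n : ℕ} {f : ℕ → ℕ} (hf : Antitone f) (k : ℕ) :
    k < lenF n f ↔ k < n ∧ 1 ≤ f k :=
  initseg_card_iff (fun i j hij hj => le_trans hj (hf hij)) k

private lemma lenF_le {n : ℕ} {f : ℕ → ℕ} : lenF n f ≤ n :=
  le_trans (Finset.card_filter_le _ _) (by simp)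

private lemma f_eq_zero_of_lenF_le {n : ℕ} {f : ℕ → ℕ} (hf : Antitone f)
    (hf0 : ∀ i, n ≤ i → f i = 0) {k : ℕ} (hk : lenF n f ≤ k) : f k = 0 := by
  by_cases hkn : k < n
  · have := (lenF_iff (n := n) hf k).not.1 (by omega)
    push_neg at this
    have := this hkn
    omega
  · exact hf0 k (by omega)

/-- The explicit vector realizing a prescribed multiplicity partition `f`,
with the zero value assigned to block `s` (if `s` is a block). -/
private lemma exists_vector (K : Type*) [Field K] [CharZero K] [DecidableEq K] {n : ℕ}
    (f : ℕ → ℕ) (hf : Antitone f) (hf0 : ∀ i, n ≤ i → f i = 0)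
    (hsum : ∑ i ∈ Finset.range n, f i = n) (s : ℕ) :
    ∃ z : Fin n → K,
      (multMS (fun i => z i ^ 2) = Multiset.map f (Multiset.range (lenF n f))) ∧
      (Finset.univ.filter fun i => z i = 0).card
        = (if s < lenF n f then f s else 0) := by
  classical
  set c := lenF n f with hc
  have hcn : c ≤ n := lenF_le
  set S : ℕ → ℕ := fun j => ∑ i ∈ Finset.range j, f i with hS
  have hSmono : Monotone S := fun i j hij => Finset.sum_le_sum_of_subset (by simpa using hij)
  have hSc : S c = n := by
    rw [← hsum]
    apply Finset.sum_subset (by simpa using hcn)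
    intro x hx hxc
    simp only [mem_range] at hx hxc
    exact f_eq_zero_of_lenF_le hf hf0 (by omega)
  have hSsucc : ∀ j, S (j + 1) = S j + f j := fun j => Finset.sum_range_succ f j
  set gN : ℕ → ℕ := fun m => ((Finset.range c).filter fun j => S (j+1) ≤ m).card with hgNdef
  have hgN : ∀ m, m < n → ∀ k, (k < gN m ↔ S (k+1) ≤ m) := by
    intro m hm k
    have base := initseg_card_iff (n := c) (P := fun j => S (j+1) ≤ m)
      (fun i j hij hj => le_trans (hSmono (by omega)) hj) k
    rw [base]
    constructor
    · exact fun h => h.2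
    · intro h
      refine ⟨?_, h⟩
      by_contra hkc
      have : S c ≤ S (k+1) := hSmono (by omega)
      omega
  have hgNlt : ∀ m, m < n → gN m < c := by
    intro m hm
    have hle : gN m ≤ c := le_trans (Finset.card_filter_le _ _) (by simp)
    rcases Nat.eq_zero_or_pos c with hc0 | hc0
    · exfalso; rw [hc0] at hSc; simp [hS] at hSc; omega
    · rcases lt_or_eq_of_le hle with h | h
      · exact h
      · exfalso
        have : c - 1 < gN m := by omega
        have := (hgN m hm (c-1)).1 this
        have hceq : c - 1 + 1 = c := by omega
        rw [hceq] at this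
        omega
  have hgNeq : ∀ m, m < n → ∀ j, (gN m = j ↔ S j ≤ m ∧ m < S (j+1)) := by
    intro m hm j
    constructor
    · intro h
      constructor
      · rcases Nat.eq_zero_or_pos j with rfl | hj
        · simp [hS]
        · have : j - 1 < gN m := by omega
          have := (hgN m hm (j-1)).1 this
          have hje : j - 1 + 1 = j := by omega
          rwa [hje] at this
      · by_contra hcon
        have := (hgN m hm j).2 (by omega)
        omega
    · rintro ⟨h1, h2⟩
      have hub : ¬ j < gN m := fun hcon => by have := (hgN m hm j).1 hcon; omega
      rcases Nat.eq_zero_or_pos j with rfl | hj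
      · omega
      · have : j - 1 < gN m := by
          apply (hgN m hm (j-1)).2
          have hje : j - 1 + 1 = j := by omega
          rw [hje]; exact h1
        omega
  have hfiber : ∀ j, ((Finset.range n).filter fun m => gN m = j).card
      = if j < c then f j else 0 := by
    intro j
    by_cases hj : j < c
    · have hset : ((Finset.range n).filter fun m => gN m = j) = Finset.Ico (S j) (S (j+1)) := by
        ext m
        simp only [mem_filter, mem_range, Finset.mem_Ico]
        constructor
        · rintro ⟨hm, hgm⟩
          exact (hgNeq m hm j).1 hgm
        · rintro ⟨h1, h2⟩
          have hm : m < n := by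
            have : S (j+1) ≤ S c := hSmono (by omega)
            omega
          exact ⟨hm, (hgNeq m hm j).2 ⟨h1, h2⟩⟩
      rw [hset, Nat.card_Ico, if_pos hj, hSsucc]
      omega
    · rw [if_neg hj]
      rw [Finset.card_eq_zero, Finset.filter_eq_empty_iff]
      intro m hm
      simp only [mem_range] at hm
      have := hgNlt m hm
      omega
  have hsurj : ∀ j, j < c → ∃ m, m < n ∧ gN m = j := by
    intro j hj
    refine ⟨S j, ?_, ?_⟩
    · have h1 : S (j+1) ≤ S c := hSmono (by omega)
      have h2 : 1 ≤ f j := ((lenF_iff hf j).1 hj).2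
      have := hSsucc j
      omega
    · apply (hgNeq (S j) ?_ j).2
      · have h2 : 1 ≤ f j := ((lenF_iff hf j).1 hj).2
        have := hSsucc j
        exact ⟨le_refl _, by omega⟩
      · have h1 : S (j+1) ≤ S c := hSmono (by omega)
        have h2 : 1 ≤ f j := ((lenF_iff hf j).1 hj).2
        have := hSsucc j
        omega
  set a : ℕ → K := fun j => if j = s then 0 else ((j + 1 : ℕ) : K) with ha
  have ha_zero : ∀ j, a j = 0 ↔ j = s := by
    intro j
    constructor
    · intro h
      by_contra hjs
      rw [ha] at h
      simp only [if_neg hjs] at h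
      exact_mod_cast h
    · intro h; simp [ha, h]
  have ha2inj : ∀ j k, (a j) ^ 2 = (a k) ^ 2 → j = k := by
    intro j k h
    by_cases hj : j = s <;> by_cases hk : k = s
    · omega
    · exfalso
      rw [ha] at h
      simp only [if_pos hj, if_neg hk] at h
      rw [eq_comm, zero_pow (by norm_num)] at h
      have : ((k+1:ℕ):K) = 0 := pow_eq_zero_iff (two_ne_zero) |>.1 h
      exact_mod_cast this
    · exfalso
      rw [ha] at h
      simp only [if_neg hj, if_pos hk] at h
      rw [zero_pow (by norm_num)] at h
      have : ((j+1:ℕ):K) = 0 := pow_eq_zero_iff (two_ne_zero) |>.1 h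
      exact_mod_cast this
    · rw [ha] at h
      simp only [if_neg hj, if_neg hk] at h
      have : ((j+1)^2 : ℕ) = ((k+1)^2 : ℕ) := by exact_mod_cast h
      nlinarith [this]
  refine ⟨fun i => a (gN i.val), ?_, ?_⟩
  · set a' : ℕ → K := fun j => (a j) ^ 2 with ha'
    have ha'inj : Function.Injective a' := fun j k h => ha2inj j k h
    have himg : (Finset.univ.image fun i : Fin n => a (gN i.val) ^ 2)
        = (Finset.range c).image a' := by
      ext v
      simp only [Finset.mem_image, mem_univ, true_and, mem_range]
      constructor
      · rintro ⟨i, rfl⟩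
        exact ⟨gN i.val, hgNlt i.val i.isLt, rfl⟩
      · rintro ⟨j, hj, rfl⟩
        obtain ⟨m, hm, hgm⟩ := hsurj j hj
        exact ⟨⟨m, hm⟩, by simp [hgm, ha']⟩
    unfold multMS
    rw [himg, Finset.image_val_of_injOn (ha'inj.injOn)]
    rw [Multiset.map_map]
    rw [Finset.range_val]
    have : Multiset.map ((fun v => (Finset.univ.filter fun i : Fin n =>
        a (gN i.val) ^ 2 = v).card) ∘ a') (Multiset.range c)
        = Multiset.map f (Multiset.range c) := by
      apply Multiset.map_congr rfl
      intro j hj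
      simp only [Multiset.mem_range] at hj
      simp only [Function.comp_apply]
      have : (Finset.univ.filter fun i : Fin n => a (gN i.val) ^ 2 = a' j)
          = Finset.univ.filter fun i : Fin n => gN i.val = j := by
        apply Finset.filter_congr
        intro i _
        constructor
        · intro h; exact ha2inj _ _ h
        · intro h; rw [h]
      rw [this, card_filter_fin_val (fun m => gN m = j), hfiber j, if_pos hj]
    rw [this]
  · have : (Finset.univ.filter fun i : Fin n => a (gN i.val) = 0)
        = (Finset.univ.filter fun i : Fin n => gN i.val = s) := by
      apply Finset.filter_congr
      intro i _
      exact ha_zero _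
    rw [this, card_filter_fin_val (fun m => gN m = s), hfiber s]

end OrbitSetProof

open SpechtBn in
/-- The orbit set `H_{(λ,μ)}` is non-empty iff `λ₁ = λ₂ = ⋯ = λ_{len(μ)+1}`. -/
theorem orbitSet_nonempty_iff {K : Type*} [Field K] [CharZero K] {n : ℕ}
    (p : Bipartition n) :
    (orbitSet n K p.l p.m).Nonempty ↔ ∀ i ≤ lenF n p.m, p.l i = p.l 0 := by
  classical
  obtain ⟨⟨hlanti, hl0⟩, ⟨hmanti, hm0⟩, hsumBP⟩ := p.isBP
  have Liff : ∀ k, k < lenF n p.m ↔ k < n ∧ 1 ≤ p.m k := lenF_iff hmanti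
  constructor
  · rintro ⟨z, hz1, hz2⟩
    set F : ℕ → ℕ := snType (fun i => z i ^ 2) with hF
    set t : ℕ := zeroCount z with ht
    have hz1' : cutFst n F t = p.l := hz1
    have hz2' : cutSnd n F t = p.m := hz2
    have hFanti : Antitone F := snType_antitone _
    have hcut : ∀ k, k < cutIdx n F t ↔ k < n ∧ (t ≤ F k ∧ 1 ≤ F k) := by
      intro k
      unfold cutIdx
      exact initseg_card_iff
        (fun i j hij hj => ⟨le_trans hj.1 (hFanti hij), le_trans hj.2 (hFanti hij)⟩) k
    intro i hi
    rcases Nat.eq_zero_or_pos (cutIdx n F t) with hc0 | hc0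
    · -- no parts at all: p.m ≡ 0 and the claim is trivial
      have hmz : ∀ k, p.m k = 0 := by
        intro k
        rw [← hz2']
        unfold cutSnd
        rw [if_neg (by omega)]
      have hL0 : lenF n p.m = 0 := by
        by_contra h
        have := (Liff 0).1 (by omega)
        rw [hmz 0] at this
        omega
      rw [hL0] at hi
      interval_cases i
      rfl
    · have hpl0 : p.l 0 = t := by
        rw [← hz1']
        unfold cutFst
        rw [if_pos hc0]
      rcases Nat.eq_zero_or_pos t with ht0 | ht1
      · -- t = 0
        have key : ∀ k, k < lenF n p.m ↔ k < cutIdx n F t := by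
          intro k
          rw [Liff k]
          constructor
          · rintro ⟨hkn, hk1⟩
            rw [← hz2'] at hk1
            unfold cutSnd at hk1
            by_contra hkc
            rw [if_neg hkc] at hk1
            omega
          · intro hkc
            have h2 := (hcut k).1 hkc
            refine ⟨h2.1, ?_⟩
            rw [← hz2']
            unfold cutSnd
            rw [if_pos hkc]
            omega
        have hLc : lenF n p.m = cutIdx n F t := by
          rcases lt_trichotomy (lenF n p.m) (cutIdx n F t) with h | h | h
          · exact absurd ((key _).2 h) (lt_irrefl _)
          · exact h
          · exact absurd ((key _).1 h) (lt_irrefl _)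
        rw [hLc] at hi
        rcases lt_or_eq_of_le hi with hic | hic
        · rw [hpl0, ← hz1']
          unfold cutFst
          rw [if_pos hic]
        · have hFc : F i = 0 := by
            by_cases hcn : i < n
            · have := (hcut i).not.1 (by omega)
              push_neg at this
              have h3 := this hcn
              omega
            · exact snType_zero _ (by omega)
          rw [hpl0, ← hz1']
          unfold cutFst
          rw [if_neg (by omega), hFc]
          omega
      · -- t ≥ 1 : the value t occurs as a part of F
        have hnz : ∃ i₀ : Fin n, z i₀ = 0 := by
          by_contra h
          push_neg at h
          have hzz : zeroCount z = 0 := by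
            rw [zeroCount_eq, Finset.card_eq_zero, Finset.filter_eq_empty_iff]
            exact fun i _ => h i
          omega
        obtain ⟨i₀, hz0⟩ := hnz
        obtain ⟨j, hjn, hjF⟩ := snType_exists (fun i => z i ^ 2) i₀
        have hFj : F j = t := by
          rw [hF, hjF, ht, zeroCount_eq]
          congr 1
          apply Finset.filter_congr
          intro k _
          rw [hz0]
          rw [zero_pow (two_ne_zero)]
          exact pow_eq_zero_iff (two_ne_zero)
        have hjc : j < cutIdx n F t := (hcut j).2 ⟨hjn, by omega, by omega⟩
        have hLj : lenF n p.m ≤ j := by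
          by_contra h
          push_neg at h
          have h1 := (Liff j).1 h
          have h2 : p.m j = 0 := by
            rw [← hz2']
            unfold cutSnd
            rw [if_pos hjc]
            omega
          omega
        rw [hpl0, ← hz1']
        unfold cutFst
        rw [if_pos (by omega)]
  · intro hcond
    set L := lenF n p.m with hL
    set t := p.l 0 with ht
    set f : ℕ → ℕ := fun i => p.l i + p.m i with hf
    have hfanti : Antitone f := fun i j hij => add_le_add (hlanti hij) (hmanti hij)
    have hf0 : ∀ i, n ≤ i → f i = 0 := fun i hi => by simp [hf, hl0 i hi, hm0 i hi]
    have hfsum : ∑ i ∈ Finset.range n, f i = n := hsumBP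
    have hmused : ∀ i, L ≤ i → p.m i = 0 := fun i hi =>
      f_eq_zero_of_lenF_le hmanti hm0 hi
    have hlL : p.l L = t := hcond L (le_refl _)
    set s := if t = 0 then n else L with hs
    obtain ⟨z, hmult, hzc⟩ := exists_vector K f hfanti hf0 hfsum s
    have hfz : ∀ j, lenF n f ≤ j → f j = 0 := fun j hj =>
      f_eq_zero_of_lenF_le hfanti hf0 hj
    have hsnt : (snType fun i => z i ^ 2) = f := by
      funext j
      rw [snType_eq, sorted_desc_eq hfanti hmult hfz j]
    have hLn' : 1 ≤ t → L < n := by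
      intro ht1
      by_contra h
      push_neg at h
      have : p.l L = 0 := hl0 L h
      omega
    have hzct : zeroCount z = t := by
      rw [zeroCount_eq, hzc]
      rcases Nat.eq_zero_or_pos t with ht0 | ht1
      · rw [hs, if_pos ht0, if_neg (by have := lenF_le (n := n) (f := f); omega)]
        omega
      · have hLn : L < n := hLn' ht1
        have hfL : f L = t := by
          simp only [hf]
          rw [hmused L (le_refl _), hlL]
          omega
        have hLlen : L < lenF n f := (lenF_iff hfanti L).2 ⟨hLn, by omega⟩
        have hsL : s = L := by rw [hs, if_neg (by omega)]
        rw [hsL, if_pos hLlen, hfL]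
    -- the cut of f at t is (p.l, p.m)
    have hcut' : ∀ k, k < cutIdx n f t ↔ k < n ∧ (t ≤ f k ∧ 1 ≤ f k) := by
      intro k
      unfold cutIdx
      exact initseg_card_iff
        (fun i j hij hj => ⟨le_trans hj.1 (hfanti hij), le_trans hj.2 (hfanti hij)⟩) k
    have hLc' : ∀ i, i < L → i < cutIdx n f t := by
      intro i hiL
      have h1 := (Liff i).1 hiL
      have h2 : p.l i = t := hcond i (by omega)
      apply (hcut' i).2
      refine ⟨h1.1, ?_, ?_⟩ <;> simp only [hf] <;> omega
    have hLlec' : L ≤ cutIdx n f t := by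
      by_contra h
      push_neg at h
      exact absurd (hLc' _ h) (lt_irrefl _)
    have hplc' : ∀ i, i < cutIdx n f t → p.l i = t := by
      intro i hic
      rcases le_or_gt i L with h | h
      · exact hcond i h
      · have h1 : p.m i = 0 := hmused i (by omega)
        have h2 : t ≤ f i := ((hcut' i).1 hic).2.1
        have h3 : p.l i ≤ t := by
          rw [← hlL]
          exact hlanti (le_of_lt h)
        simp only [hf] at h2
        omega
    have hcFst : cutFst n f t = p.l := by
      funext k
      unfold cutFst
      by_cases hk : k < cutIdx n f t
      · rw [if_pos hk, hplc' k hk]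
      · rw [if_neg hk]
        have : p.m k = 0 := hmused k (by omega)
        simp only [hf]
        omega
    have hcSnd : cutSnd n f t = p.m := by
      funext k
      unfold cutSnd
      by_cases hk : k < cutIdx n f t
      · rw [if_pos hk]
        have h2 : p.l k = t := hplc' k hk
        simp only [hf]
        omega
      · rw [if_neg hk]
        have : p.m k = 0 := hmused k (by omega)
        omega
    refine ⟨z, ?_, ?_⟩
    · show omegaFst z = p.l
      unfold omegaFst
      rw [hsnt, hzct]
      exact hcFst
    · show omegaSnd z = p.m
      unfold omegaSnd
      rw [hsnt, hzct]
      exact hcSnd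
end

section
/- Let K be a field of characteristic 0, let a ≥ 1 and b ≥ 0 be integers, and set A = {1,…,a}, B₁ = {a+1,…,a+b}, B₂ = {a+b+1,…,a+2b} as subsets of indices of the polynomial ring K[y₁,…,y_{a+2b}]. Let G = S_{A∪B₁} (the symmetric group on A∪B₁, acting by permuting the corresponding variables), H = S_A × S_{B₁} ≤ G, and define Q* = Δ_A(y) · Δ_{B₁}(y) · ∏_{i∈A} ∏_{j∈B₂} (y_i − y_j), where for a finite index set S, Δ_S(y) = ∏_{i<j, i,j∈S} (y_i − y_j). Then ε(τ)·τ(Q*) = Q* for every τ ∈ H, and for any set R of representatives of the left cosets of H in G, Σ_{σ∈R} ε(σ)·σ(Q*) = Δ_{A∪B₁}(y), where ε denotes the sign character. -/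
namespace SpechtBn

open MvPolynomial

/-- the Vandermonde polynomial of a finite set of (naturally ordered) indices. -/
noncomputable def vdm (N : ℕ) (K : Type*) [CommRing K] (S : Finset (Fin N)) :
    MvPolynomial (Fin N) K :=
  ∏ p ∈ (S ×ˢ S).filter (fun p => p.1 < p.2), (X p.1 - X p.2)

/-- `A = {1,…,a}` (as indices `0,…,a−1`). -/
def setA (a b : ℕ) : Finset (Fin (a + 2 * b)) :=
  Finset.univ.filter fun i => (i : ℕ) < a

/-- `B₁ = {a+1,…,a+b}`. -/
def setB1 (a b : ℕ) : Finset (Fin (a + 2 * b)) :=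
  Finset.univ.filter fun i => a ≤ (i : ℕ) ∧ (i : ℕ) < a + b

/-- `B₂ = {a+b+1,…,a+2b}`. -/
def setB2 (a b : ℕ) : Finset (Fin (a + 2 * b)) :=
  Finset.univ.filter fun i => a + b ≤ (i : ℕ)

/-- `Q* = Δ_A · Δ_{B₁} · ∏_{i∈A} ∏_{j∈B₂} (y_i − y_j)`. -/
noncomputable def Qstar (a b : ℕ) (K : Type*) [CommRing K] :
    MvPolynomial (Fin (a + 2 * b)) K :=
  vdm (a + 2 * b) K (setA a b) * vdm (a + 2 * b) K (setB1 a b) *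
    ∏ i ∈ setA a b, ∏ j ∈ setB2 a b, (X i - X j)

/-- membership in `G = S_{A ∪ B₁}`: permutations fixing `B₂` pointwise. -/
def inG (a b : ℕ) (σ : Equiv.Perm (Fin (a + 2 * b))) : Prop :=
  ∀ i : Fin (a + 2 * b), a + b ≤ (i : ℕ) → σ i = i

/-- membership in `H = S_A × S_{B₁} ≤ G`. -/
def inH (a b : ℕ) (σ : Equiv.Perm (Fin (a + 2 * b))) : Prop :=
  inG a b σ ∧ ∀ i : Fin (a + 2 * b), (i : ℕ) < a → (σ i : ℕ) < a

end SpechtBn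

namespace SpechtBn
open MvPolynomial Equiv Equiv.Perm Finset

/-- pairs (i,j) with i < j -/
def pf (k : ℕ) : Finset (Fin k × Fin k) :=
  (Finset.univ ×ˢ Finset.univ).filter fun p => p.1 < p.2

lemma prod_pf {M : Type*} [CommMonoid M] {k : ℕ} (F : Fin k → Fin k → M) :
    ∏ p ∈ pf k, F p.1 p.2 = ∏ i, ∏ j ∈ Finset.Ioi i, F i j := by
  rw [pf, Finset.prod_filter, Finset.prod_product]
  refine Finset.prod_congr rfl fun i _ => ?_
  rw [← Finset.prod_filter]
  congr 1
  ext j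
  simp [Finset.mem_Ioi]

lemma two_mul_card_pf (k : ℕ) : 2 * (pf k).card = k * k - k := by
  classical
  have hswap : (pf k).card =
      (((Finset.univ ×ˢ Finset.univ : Finset (Fin k × Fin k))).filter fun p => p.2 < p.1).card := by
    refine Finset.card_bij (fun p _ => Prod.swap p) ?_ ?_ ?_
    · intro p hp; simp only [pf, Finset.mem_filter, Finset.mem_product] at hp ⊢
      exact ⟨⟨Finset.mem_univ _, Finset.mem_univ _⟩, hp.2⟩
    · intro p _ q _ h; exact Prod.swap_injective h
    · intro p hp
      simp only [pf, Finset.mem_filter, Finset.mem_product] at hp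
      exact ⟨Prod.swap p, by simp [pf, hp.2], by simp⟩
  have hunion : ((Finset.univ ×ˢ Finset.univ : Finset (Fin k × Fin k)).filter fun p => p.1 < p.2) ∪
      ((Finset.univ ×ˢ Finset.univ).filter fun p => p.2 < p.1) = (Finset.univ : Finset (Fin k)).offDiag := by
    rw [← Finset.filter_or]
    ext p
    simp only [Finset.mem_filter, Finset.mem_product, Finset.mem_offDiag, Finset.mem_univ,
      true_and, and_true, Fin.lt_def]
    rw [Ne, ← Fin.val_eq_val]
    omega
  have hdisj : Disjoint ((Finset.univ ×ˢ Finset.univ : Finset (Fin k × Fin k)).filter fun p => p.1 < p.2)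
      ((Finset.univ ×ˢ Finset.univ).filter fun p => p.2 < p.1) := by
    rw [Finset.disjoint_left]
    intro p h1 h2
    simp only [Finset.mem_filter] at h1 h2
    exact absurd h2.2 (not_lt.2 h1.2.le)
  have := Finset.card_union_of_disjoint hdisj
  rw [hunion, Finset.offDiag_card, Finset.card_univ, Fintype.card_fin] at this
  have hpf : (pf k).card + (pf k).card = k * k - k := by
    rw (occs := .pos [2]) [hswap]
    exact this ▸ rfl
  omega

lemma card_pf_add (a b : ℕ) : (pf a).card + (pf b).card + a * b = (pf (a + b)).card := by
  have h1 := two_mul_card_pf a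
  have h2 := two_mul_card_pf b
  have h3 := two_mul_card_pf (a + b)
  have e : (a + b) * (a + b) = a * a + b * b + 2 * (a * b) := by ring
  have ha : a ≤ a * a := by nlinarith
  have hb : b ≤ b * b := by nlinarith
  have hs : a + b ≤ (a + b) * (a + b) := by nlinarith
  zify [ha, hb, hs] at h1 h2 h3
  have : (2:ℤ) * ((pf a).card + (pf b).card + a * b) = 2 * (pf (a+b)).card := by
    linarith [h1, h2, h3]
  omega

lemma prod_sub_eq {K : Type*} [CommRing K] {k : ℕ} (x : Fin k → K) :
    ∏ p ∈ pf k, (x p.1 - x p.2) = (-1 : K) ^ (pf k).card * Matrix.det (Matrix.vandermonde x) := by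
  rw [Matrix.det_vandermonde, ← prod_pf (fun i j => x j - x i), ← Finset.prod_const (-1 : K),
    ← Finset.prod_mul_distrib]
  exact Finset.prod_congr rfl fun p _ => by ring

lemma prod_sub_comp_perm {K : Type*} [CommRing K] {k : ℕ} (x : Fin k → K) (σ : Equiv.Perm (Fin k)) :
    ∏ p ∈ pf k, (x (σ p.1) - x (σ p.2)) =
      ((Equiv.Perm.sign σ : ℤ) : K) * ∏ p ∈ pf k, (x p.1 - x p.2) := by
  have h1 := prod_sub_eq (K := K) (x ∘ σ)
  have hv : Matrix.vandermonde (x ∘ ⇑σ) = (Matrix.vandermonde x).submatrix (⇑σ) id := by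
    ext i j; simp [Matrix.vandermonde]
  rw [hv, Matrix.det_permute] at h1
  rw [prod_sub_eq x]
  simp only [Function.comp_apply] at h1
  rw [h1]
  rcases Int.units_eq_one_or (Equiv.Perm.sign σ) with h | h <;> rw [h] <;> simp <;> ring

lemma prod_bij_single {n k : ℕ} {M : Type*} [CommMonoid M] (S : Finset (Fin n)) (φ : Fin k → Fin n)
    (hinj : Function.Injective φ) (hmem : ∀ j, j ∈ S ↔ ∃ i, φ i = j) (F : Fin n → M) :
    ∏ j ∈ S, F j = ∏ i, F (φ i) :=
  (Finset.prod_bij (fun i _ => φ i) (fun i _ => (hmem _).2 ⟨i, rfl⟩)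
    (fun i _ j _ h => hinj h)
    (fun j hj => by obtain ⟨i, hi⟩ := (hmem j).1 hj; exact ⟨i, Finset.mem_univ _, hi⟩)
    (fun i _ => rfl)).symm

lemma prod_pairs_bij {n k : ℕ} {M : Type*} [CommMonoid M] (S : Finset (Fin n)) (φ : Fin k → Fin n)
    (hmono : StrictMono φ) (hmem : ∀ j, j ∈ S ↔ ∃ i, φ i = j) (F : Fin n → Fin n → M) :
    ∏ p ∈ (S ×ˢ S).filter (fun p => p.1 < p.2), F p.1 p.2 = ∏ p ∈ pf k, F (φ p.1) (φ p.2) :=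
  (Finset.prod_bij (fun p _ => (φ p.1, φ p.2))
    (fun p hp => by
      simp only [pf, Finset.mem_filter, Finset.mem_product, Finset.mem_univ, true_and] at hp ⊢
      exact ⟨⟨(hmem _).2 ⟨p.1, rfl⟩, (hmem _).2 ⟨p.2, rfl⟩⟩, hmono hp⟩)
    (fun p _ q _ h => by
      have h1 := congrArg Prod.fst h; have h2 := congrArg Prod.snd h
      exact Prod.ext (hmono.injective h1) (hmono.injective h2))
    (fun p hp => by
      simp only [Finset.mem_filter, Finset.mem_product] at hp
      obtain ⟨i, hi⟩ := (hmem p.1).1 hp.1.1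
      obtain ⟨j, hj⟩ := (hmem p.2).1 hp.1.2
      refine ⟨(i, j), ?_, by simp [hi, hj]⟩
      simp only [pf, Finset.mem_filter, Finset.mem_product, Finset.mem_univ, true_and]
      rw [← hmono.lt_iff_lt]; rw [hi, hj]; exact hp.2)
    (fun p _ => rfl)).symm

lemma rot_pow_val (M c : ℕ) (k : Fin (M + 1)) :
    ((((finRotate (M + 1)) ^ c) k : Fin (M + 1)) : ℕ) = ((k : ℕ) + c) % (M + 1) := by
  induction c with
  | zero => simp [Nat.mod_eq_of_lt k.isLt]
  | succ c ih =>
    rw [pow_succ', Equiv.Perm.mul_apply, finRotate_succ_apply, Fin.add_def]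
    simp only [Fin.val_one']
    rw [ih, show (k : ℕ) + (c + 1) = ((k : ℕ) + c) + 1 by ring, Nat.add_mod ((k:ℕ) + c) 1]

def iM (a b : ℕ) (i : Fin (a + b)) : Fin (a + 2 * b) := ⟨i.1, by have := i.2; omega⟩
def iA (a b : ℕ) (i : Fin a) : Fin (a + 2 * b) := ⟨i.1, by have := i.2; omega⟩
def iB (a b : ℕ) (i : Fin b) : Fin (a + 2 * b) := ⟨a + i.1, by have := i.2; omega⟩
def iC (a b : ℕ) (i : Fin b) : Fin (a + 2 * b) := ⟨a + b + i.1, by have := i.2; omega⟩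

lemma iA_eq (a b : ℕ) (i : Fin a) : iA a b i = iM a b (Fin.castAdd b i) := rfl
lemma iB_eq (a b : ℕ) (i : Fin b) : iB a b i = iM a b (Fin.natAdd a i) := rfl

def eA (a b : ℕ) : Fin a ≃ {i : Fin (a + 2 * b) // (i : ℕ) < a} where
  toFun i := ⟨iA a b i, i.2⟩
  invFun j := ⟨j.1.1, j.2⟩
  left_inv i := rfl
  right_inv j := rfl

def eB (a b : ℕ) : Fin b ≃ {i : Fin (a + 2 * b) // a ≤ (i : ℕ) ∧ (i : ℕ) < a + b} where
  toFun j := ⟨iB a b j, ⟨Nat.le_add_right a j.1, show a + j.1 < a + b by have := j.2; omega⟩⟩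
  invFun j := ⟨j.1.1 - a, by have := j.2; omega⟩
  left_inv j := Fin.ext (show a + j.1 - a = j.1 by omega)
  right_inv j := Subtype.ext (Fin.ext (show a + (j.1.1 - a) = j.1.1 by have := j.2; omega))

def eM (a b : ℕ) : Fin (a + b) ≃ {i : Fin (a + 2 * b) // (i : ℕ) < a + b} where
  toFun i := ⟨iM a b i, i.2⟩
  invFun j := ⟨j.1.1, j.2⟩
  left_inv i := rfl
  right_inv j := rfl

noncomputable def extA (a b : ℕ) (α : Equiv.Perm (Fin a)) : Equiv.Perm (Fin (a + 2 * b)) :=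
  α.extendDomain (eA a b)

noncomputable def extB (a b : ℕ) (β : Equiv.Perm (Fin b)) : Equiv.Perm (Fin (a + 2 * b)) :=
  β.extendDomain (eB a b)

noncomputable def extM (a b : ℕ) (g : Equiv.Perm (Fin (a + b))) : Equiv.Perm (Fin (a + 2 * b)) :=
  g.extendDomain (eM a b)

lemma iM_inj (a b : ℕ) : Function.Injective (iM a b) := fun x y h =>
  Fin.ext (show x.1 = y.1 from congrArg (fun z : Fin (a + 2 * b) => z.1) h)

lemma iA_inj (a b : ℕ) : Function.Injective (iA a b) := fun x y h =>
  Fin.ext (show x.1 = y.1 from congrArg (fun z : Fin (a + 2 * b) => z.1) h)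

lemma iB_inj (a b : ℕ) : Function.Injective (iB a b) := fun x y h => by
  have h2 : a + x.1 = a + y.1 := congrArg (fun z : Fin (a + 2 * b) => z.1) h
  exact Fin.ext (by omega)

lemma extA_iA (a b : ℕ) (α : Equiv.Perm (Fin a)) (i : Fin a) :
    extA a b α (iA a b i) = iA a b (α i) := by
  have h : ((iA a b i : Fin (a + 2 * b)) : ℕ) < a := i.2
  rw [extA, Equiv.Perm.extendDomain_apply_subtype α (eA a b) h]
  rfl

lemma extA_fix (a b : ℕ) (α : Equiv.Perm (Fin a)) (j : Fin (a + 2 * b)) (h : ¬ (j : ℕ) < a) :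
    extA a b α j = j :=
  Equiv.Perm.extendDomain_apply_not_subtype α (eA a b) h

lemma extB_iB (a b : ℕ) (β : Equiv.Perm (Fin b)) (j : Fin b) :
    extB a b β (iB a b j) = iB a b (β j) := by
  have h : a ≤ ((iB a b j : Fin (a + 2 * b)) : ℕ) ∧ ((iB a b j : Fin (a + 2 * b)) : ℕ) < a + b :=
    ⟨Nat.le_add_right a j.1, show a + j.1 < a + b by have := j.2; omega⟩
  rw [extB, Equiv.Perm.extendDomain_apply_subtype β (eB a b) h]
  apply Fin.ext
  simp [eB, iB]

lemma extB_fix (a b : ℕ) (β : Equiv.Perm (Fin b)) (j : Fin (a + 2 * b))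
    (h : ¬ (a ≤ (j : ℕ) ∧ (j : ℕ) < a + b)) : extB a b β j = j :=
  Equiv.Perm.extendDomain_apply_not_subtype β (eB a b) h

lemma extM_iM (a b : ℕ) (g : Equiv.Perm (Fin (a + b))) (i : Fin (a + b)) :
    extM a b g (iM a b i) = iM a b (g i) := by
  have h : ((iM a b i : Fin (a + 2 * b)) : ℕ) < a + b := i.2
  rw [extM, Equiv.Perm.extendDomain_apply_subtype g (eM a b) h]
  rfl

lemma extM_fix (a b : ℕ) (g : Equiv.Perm (Fin (a + b))) (j : Fin (a + 2 * b))
    (h : ¬ (j : ℕ) < a + b) : extM a b g j = j :=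
  Equiv.Perm.extendDomain_apply_not_subtype g (eM a b) h

lemma sign_extM (a b : ℕ) (g : Equiv.Perm (Fin (a + b))) :
    Equiv.Perm.sign (extM a b g) = Equiv.Perm.sign g :=
  Equiv.Perm.sign_extendDomain g (eM a b)

lemma sign_extA (a b : ℕ) (α : Equiv.Perm (Fin a)) :
    Equiv.Perm.sign (extA a b α) = Equiv.Perm.sign α :=
  Equiv.Perm.sign_extendDomain α (eA a b)

lemma sign_extB (a b : ℕ) (β : Equiv.Perm (Fin b)) :
    Equiv.Perm.sign (extB a b β) = Equiv.Perm.sign β :=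
  Equiv.Perm.sign_extendDomain β (eB a b)

lemma inG_extM (a b : ℕ) (g : Equiv.Perm (Fin (a + b))) : inG a b (extM a b g) :=
  fun i hi => extM_fix a b g i (by omega)

lemma extM_inj (a b : ℕ) : Function.Injective (extM a b) := by
  intro g g' h
  ext i
  have h2 := congrFun (congrArg (fun (e : Equiv.Perm (Fin (a + 2*b))) => (e : Fin (a+2*b) → Fin (a+2*b))) h) (iM a b i)
  simp only [extM_iM] at h2
  exact congrArg Fin.val (iM_inj a b h2)

lemma extM_surj (a b : ℕ) (σ : Equiv.Perm (Fin (a + 2 * b))) (h : inG a b σ) :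
    ∃ g, extM a b g = σ := by
  have hlt : ∀ i : Fin (a + 2 * b), (i : ℕ) < a + b → ((σ i : ℕ) < a + b) := by
    intro i hi
    by_contra hc
    push_neg at hc
    have h1 : σ (σ i) = σ i := h _ hc
    have h2 := σ.injective h1
    have h3 := congrArg Fin.val h2
    omega
  have hiff : ∀ i : Fin (a + 2 * b), ((i : ℕ) < a + b) ↔ ((σ i : ℕ) < a + b) := by
    intro i
    refine ⟨hlt i, fun hs => ?_⟩
    by_contra hc
    push_neg at hc
    have h1 := h i (by omega)
    rw [h1] at hs
    omega
  refine ⟨(Equiv.permCongr (eM a b)).symm (σ.subtypePerm (fun i => (hiff i).symm)), ?_⟩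
  ext i
  by_cases hi : (i : ℕ) < a + b
  · rw [extM, Equiv.Perm.extendDomain_apply_subtype _ (eM a b) hi]
    simp [Equiv.permCongr_symm, Equiv.permCongr_apply, Equiv.Perm.subtypePerm_apply, eM, iM]
  · rw [extM, Equiv.Perm.extendDomain_apply_not_subtype _ (eM a b) hi, h i (by omega)]

@[simp] lemma iA_val (a b : ℕ) (i : Fin a) : ((iA a b i : Fin (a + 2 * b)) : ℕ) = i.1 := rfl
@[simp] lemma iB_val (a b : ℕ) (i : Fin b) : ((iB a b i : Fin (a + 2 * b)) : ℕ) = a + i.1 := rfl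
@[simp] lemma iC_val (a b : ℕ) (i : Fin b) : ((iC a b i : Fin (a + 2 * b)) : ℕ) = a + b + i.1 := rfl
@[simp] lemma iM_val (a b : ℕ) (i : Fin (a + b)) : ((iM a b i : Fin (a + 2 * b)) : ℕ) = i.1 := rfl

lemma iC_inj (a b : ℕ) : Function.Injective (iC a b) := fun x y h => by
  have h2 : a + b + x.1 = a + b + y.1 := congrArg (fun z : Fin (a + 2 * b) => z.1) h
  exact Fin.ext (by omega)

noncomputable def Phi (a b : ℕ) (q : Equiv.Perm (Fin a) × Equiv.Perm (Fin b)) :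
    Equiv.Perm (Fin (a + 2 * b)) := extA a b q.1 * extB a b q.2

lemma Phi_iA (a b : ℕ) (q : Equiv.Perm (Fin a) × Equiv.Perm (Fin b)) (i : Fin a) :
    Phi a b q (iA a b i) = iA a b (q.1 i) := by
  rw [Phi, Equiv.Perm.mul_apply, extB_fix a b q.2 _ (by have := i.2; simp only [iA_val]; omega),
    extA_iA]

lemma Phi_iB (a b : ℕ) (q : Equiv.Perm (Fin a) × Equiv.Perm (Fin b)) (j : Fin b) :
    Phi a b q (iB a b j) = iB a b (q.2 j) := by
  rw [Phi, Equiv.Perm.mul_apply, extB_iB, extA_fix a b q.1 _ (by simp only [iB_val]; omega)]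

lemma Phi_iC (a b : ℕ) (q : Equiv.Perm (Fin a) × Equiv.Perm (Fin b)) (j : Fin b) :
    Phi a b q (iC a b j) = iC a b j := by
  rw [Phi, Equiv.Perm.mul_apply, extB_fix a b q.2 _ (by simp only [iC_val]; omega),
    extA_fix a b q.1 _ (by simp only [iC_val]; omega)]

lemma Phi_fix (a b : ℕ) (q : Equiv.Perm (Fin a) × Equiv.Perm (Fin b)) (i : Fin (a + 2 * b))
    (h : a + b ≤ (i : ℕ)) : Phi a b q i = i := by
  rw [Phi, Equiv.Perm.mul_apply, extB_fix a b q.2 _ (by omega), extA_fix a b q.1 _ (by omega)]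

lemma Phi_inH (a b : ℕ) (q : Equiv.Perm (Fin a) × Equiv.Perm (Fin b)) : inH a b (Phi a b q) := by
  constructor
  · exact fun i hi => Phi_fix a b q i hi
  · intro i hi
    have he : i = iA a b ⟨i.1, hi⟩ := rfl
    rw [he, Phi_iA]
    exact (q.1 ⟨i.1, hi⟩).2

lemma sign_Phi {a b : ℕ} (q : Equiv.Perm (Fin a) × Equiv.Perm (Fin b)) :
    Equiv.Perm.sign (Phi a b q) = Equiv.Perm.sign q.1 * Equiv.Perm.sign q.2 := by
  rw [Phi, map_mul, sign_extA, sign_extB]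

lemma Phi_inj (a b : ℕ) : Function.Injective (Phi a b) := by
  intro q q' h
  have hA : q.1 = q'.1 := by
    ext i
    have h2 : Phi a b q (iA a b i) = Phi a b q' (iA a b i) := by rw [h]
    rw [Phi_iA, Phi_iA] at h2
    exact congrArg Fin.val (iA_inj a b h2)
  have hB : q.2 = q'.2 := by
    ext j
    have h2 : Phi a b q (iB a b j) = Phi a b q' (iB a b j) := by rw [h]
    rw [Phi_iB, Phi_iB] at h2
    exact congrArg Fin.val (iB_inj a b h2)
  exact Prod.ext hA hB

lemma inG_iff (a b : ℕ) (σ : Equiv.Perm (Fin (a + 2 * b))) (h : inG a b σ) :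
    ∀ i : Fin (a + 2 * b), ((i : ℕ) < a + b) ↔ ((σ i : ℕ) < a + b) := by
  intro i
  constructor
  · intro hi
    by_contra hc
    push_neg at hc
    have h1 : σ (σ i) = σ i := h _ hc
    have h2 := congrArg Fin.val (σ.injective h1)
    omega
  · intro hs
    by_contra hc
    push_neg at hc
    have h1 := congrArg Fin.val (h i (by omega))
    omega

lemma Phi_surj (a b : ℕ) (τ : Equiv.Perm (Fin (a + 2 * b))) (h : inH a b τ) :
    ∃ q, Phi a b q = τ := by
  obtain ⟨hG, hA⟩ := h
  have hAiff : ∀ i : Fin (a + 2 * b), ((i : ℕ) < a) ↔ ((τ i : ℕ) < a) := by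
    have hinj : Function.Injective (fun i : Fin a => (⟨(τ (iA a b i)).1, hA _ i.2⟩ : Fin a)) := by
      intro i j hij
      have h2 : (τ (iA a b i)).1 = (τ (iA a b j)).1 := congrArg (fun z : Fin a => z.1) hij
      exact iA_inj a b (τ.injective (Fin.ext h2))
    have hu := Finite.surjective_of_injective hinj
    intro i
    refine ⟨hA i, fun hs => ?_⟩
    obtain ⟨i', hi'⟩ := hu ⟨(τ i).1, hs⟩
    have h2 : (τ (iA a b i')).1 = (τ i).1 := congrArg (fun z : Fin a => z.1) hi'
    have h3 : iA a b i' = i := τ.injective (Fin.ext h2)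
    have h4 := congrArg Fin.val h3
    have := i'.2
    simp only [iA_val] at h4
    omega
  have hMiff := inG_iff a b τ hG
  have hBiff : ∀ i : Fin (a + 2 * b),
      (a ≤ (i : ℕ) ∧ (i : ℕ) < a + b) ↔ (a ≤ (τ i : ℕ) ∧ (τ i : ℕ) < a + b) := by
    intro i
    have h1 := hAiff i
    have h2 := hMiff i
    omega
  refine ⟨((Equiv.permCongr (eA a b)).symm (τ.subtypePerm (fun i => (hAiff i).symm)),
           (Equiv.permCongr (eB a b)).symm (τ.subtypePerm (fun i => (hBiff i).symm))), ?_⟩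
  ext i
  by_cases h1 : (i : ℕ) < a
  · have he : i = iA a b ⟨i.1, h1⟩ := rfl
    rw [he, Phi_iA]
    simp [Equiv.permCongr_symm, Equiv.permCongr_apply, Equiv.Perm.subtypePerm_apply, eA, iA]
  · by_cases h2 : (i : ℕ) < a + b
    · have he : i = iB a b ⟨i.1 - a, by omega⟩ := Fin.ext (by simp only [iB_val]; omega)
      rw [he, Phi_iB]
      have h3 : ∀ x : Fin (a + 2 * b), a ≤ (x : ℕ) → (x : ℕ) < a + b → a ≤ ((τ x) : ℕ) :=
        fun x hx1 hx2 => ((hBiff x).1 ⟨hx1, hx2⟩).1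
      simp [Equiv.permCongr_symm, Equiv.permCongr_apply, Equiv.Perm.subtypePerm_apply, eB, iB]
      exact Nat.add_sub_cancel' (h3 _ (show a ≤ a + (i.1 - a) by omega)
        (show a + (i.1 - a) < a + b by omega))
    · rw [Phi_fix a b _ i (by omega), hG i (by omega)]

section EvalLemmas

variable {K : Type*} [CommRing K]

lemma eval_vdm {N : ℕ} (S : Finset (Fin N)) (z : Fin N → K) :
    eval z (vdm N K S) = ∏ p ∈ (S ×ˢ S).filter (fun p => p.1 < p.2), (z p.1 - z p.2) := by
  rw [vdm, map_prod]
  simp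

lemma mem_setA (a b : ℕ) (i : Fin (a + 2 * b)) :
    i ∈ setA a b ↔ ∃ i' : Fin a, iA a b i' = i := by
  simp only [setA, Finset.mem_filter, Finset.mem_univ, true_and]
  constructor
  · intro h; exact ⟨⟨i.1, h⟩, rfl⟩
  · rintro ⟨i', rfl⟩; exact i'.2

lemma mem_setB1 (a b : ℕ) (i : Fin (a + 2 * b)) :
    i ∈ setB1 a b ↔ ∃ i' : Fin b, iB a b i' = i := by
  simp only [setB1, Finset.mem_filter, Finset.mem_univ, true_and]
  constructor
  · intro h; exact ⟨⟨i.1 - a, by omega⟩, Fin.ext (by simp only [iB_val]; omega)⟩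
  · rintro ⟨i', rfl⟩
    have := i'.2
    simp only [iB_val]
    omega

lemma mem_setB2 (a b : ℕ) (i : Fin (a + 2 * b)) :
    i ∈ setB2 a b ↔ ∃ i' : Fin b, iC a b i' = i := by
  simp only [setB2, Finset.mem_filter, Finset.mem_univ, true_and]
  constructor
  · intro h
    have := i.2
    exact ⟨⟨i.1 - (a + b), by omega⟩, Fin.ext (by simp only [iC_val]; omega)⟩
  · rintro ⟨i', rfl⟩
    simp only [iC_val]
    omega

lemma mem_setAB1 (a b : ℕ) (i : Fin (a + 2 * b)) :
    i ∈ setA a b ∪ setB1 a b ↔ ∃ i' : Fin (a + b), iM a b i' = i := by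
  rw [Finset.mem_union, mem_setA, mem_setB1]
  constructor
  · rintro (⟨i', rfl⟩ | ⟨i', rfl⟩)
    · exact ⟨⟨i'.1, by have := i'.2; omega⟩, rfl⟩
    · exact ⟨⟨a + i'.1, by have := i'.2; omega⟩, rfl⟩
  · rintro ⟨i', rfl⟩
    by_cases h : i'.1 < a
    · exact Or.inl ⟨⟨i'.1, h⟩, rfl⟩
    · exact Or.inr ⟨⟨i'.1 - a, by have := i'.2; omega⟩,
        Fin.ext (by simp only [iB_val, iM_val]; omega)⟩

lemma mono_iA (a b : ℕ) : StrictMono (iA a b) := fun x y h => by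
  simp only [Fin.lt_def, iA_val]
  exact h

lemma mono_iB (a b : ℕ) : StrictMono (iB a b) := fun x y h => by
  simp only [Fin.lt_def, iB_val]
  exact Nat.add_lt_add_left h a

lemma mono_iM (a b : ℕ) : StrictMono (iM a b) := fun x y h => by
  simp only [Fin.lt_def, iM_val]
  exact h

lemma eval_Qstar (a b : ℕ) (z : Fin (a + 2 * b) → K) :
    eval z (Qstar a b K) =
      (∏ p ∈ pf a, (z (iA a b p.1) - z (iA a b p.2))) *
      (∏ p ∈ pf b, (z (iB a b p.1) - z (iB a b p.2))) *
      ∏ i : Fin a, ∏ j : Fin b, (z (iA a b i) - z (iC a b j)) := by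
  rw [Qstar, map_mul, map_mul, eval_vdm, eval_vdm,
    prod_pairs_bij (setA a b) (iA a b) (mono_iA a b) (mem_setA a b) (fun i j => z i - z j),
    prod_pairs_bij (setB1 a b) (iB a b) (mono_iB a b) (mem_setB1 a b) (fun i j => z i - z j)]
  congr 1
  rw [map_prod,
    prod_bij_single (setA a b) (iA a b) (iA_inj a b) (mem_setA a b)
      (fun i => eval z (∏ j ∈ setB2 a b, (X i - X j)))]
  refine Finset.prod_congr rfl fun i _ => ?_
  rw [map_prod,
    prod_bij_single (setB2 a b) (iC a b) (iC_inj a b) (mem_setB2 a b)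
      (fun j => eval z (X (iA a b i) - X j))]
  simp

lemma eval_vdm_union (a b : ℕ) (z : Fin (a + 2 * b) → K) :
    eval z (vdm (a + 2 * b) K (setA a b ∪ setB1 a b)) =
      ∏ p ∈ pf (a + b), (z (iM a b p.1) - z (iM a b p.2)) := by
  rw [eval_vdm, prod_pairs_bij (setA a b ∪ setB1 a b) (iM a b) (mono_iM a b) (mem_setAB1 a b)
    (fun i j => z i - z j)]

end EvalLemmas

lemma part1 {K : Type*} [Field K] [CharZero K] (a b : ℕ) (τ : Equiv.Perm (Fin (a + 2 * b)))
    (h : inH a b τ) :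
    MvPolynomial.C ((Equiv.Perm.sign τ : ℤ) : K) * rename (fun i => τ i) (Qstar a b K) =
      Qstar a b K := by
  obtain ⟨q, rfl⟩ := Phi_surj a b τ h
  apply MvPolynomial.funext
  intro z
  rw [map_mul, eval_C, eval_rename, eval_Qstar, eval_Qstar]
  simp only [Function.comp_apply, Phi_iA, Phi_iB, Phi_iC]
  rw [prod_sub_comp_perm (fun i => z (iA a b i)) q.1,
      prod_sub_comp_perm (fun i => z (iB a b i)) q.2,
      Equiv.prod_comp q.1 (fun i => ∏ j : Fin b, (z (iA a b i) - z (iC a b j)))]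
  rw [sign_Phi]
  rcases Int.units_eq_one_or (Equiv.Perm.sign q.1) with h1 | h1 <;>
    rcases Int.units_eq_one_or (Equiv.Perm.sign q.2) with h2 | h2 <;>
      rw [h1, h2] <;> push_cast <;> ring

section MainVal

noncomputable def blockPerm (a b : ℕ) (q : Equiv.Perm (Fin a) × Equiv.Perm (Fin b)) :
    Equiv.Perm (Fin (a + b)) :=
  (Equiv.permCongr finSumFinEquiv) (Equiv.sumCongr q.1 q.2)

lemma blockPerm_castAdd (a b : ℕ) (q : Equiv.Perm (Fin a) × Equiv.Perm (Fin b)) (i : Fin a) :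
    blockPerm a b q (Fin.castAdd b i) = Fin.castAdd b (q.1 i) := by
  rw [blockPerm, Equiv.permCongr_apply, ← finSumFinEquiv_apply_left,
    Equiv.symm_apply_apply]
  simp

lemma blockPerm_natAdd (a b : ℕ) (q : Equiv.Perm (Fin a) × Equiv.Perm (Fin b)) (j : Fin b) :
    blockPerm a b q (Fin.natAdd a j) = Fin.natAdd a (q.2 j) := by
  rw [blockPerm, Equiv.permCongr_apply, ← finSumFinEquiv_apply_right,
    Equiv.symm_apply_apply]
  simp

lemma sign_blockPerm (a b : ℕ) (q : Equiv.Perm (Fin a) × Equiv.Perm (Fin b)) :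
    Equiv.Perm.sign (blockPerm a b q) = Equiv.Perm.sign q.1 * Equiv.Perm.sign q.2 := by
  rw [blockPerm, Equiv.Perm.sign_permCongr, Equiv.Perm.sign_sumCongr]

variable {K : Type*} [Field K]

lemma main_val (a b : ℕ) (ha : 1 ≤ a) (x : Fin (a + b) → K) (t : Fin b → K) :
    ∑ g : Equiv.Perm (Fin (a + b)), ((Equiv.Perm.sign g : ℤ) : K) *
      ((∏ p ∈ pf a, (x (g (Fin.castAdd b p.1)) - x (g (Fin.castAdd b p.2)))) *
       (∏ p ∈ pf b, (x (g (Fin.natAdd a p.1)) - x (g (Fin.natAdd a p.2)))) *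
       ∏ i : Fin a, ∏ j : Fin b, (x (g (Fin.castAdd b i)) - t j)) =
    ((a.factorial * b.factorial : ℕ) : K) * ∏ p ∈ pf (a + b), (x p.1 - x p.2) := by
  classical
  set P : K → K := fun y => ∏ j : Fin b, (y - t j) with hP
  set N : Matrix (Fin (a + b)) (Fin (a + b)) K :=
    Matrix.of fun r c => if (c : ℕ) < a then x r ^ (c : ℕ) * P (x r) else x r ^ ((c : ℕ) - a)
    with hN
  -- Step 1
  have detA : ∀ g : Equiv.Perm (Fin (a + b)),
      Matrix.det (N.submatrix (⇑g ∘ Fin.castAdd b) (Fin.castAdd b)) =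
        (∏ i : Fin a, P (x (g (Fin.castAdd b i)))) *
          Matrix.det (Matrix.vandermonde (x ∘ ⇑g ∘ Fin.castAdd b)) := by
    intro g
    have he : N.submatrix (⇑g ∘ Fin.castAdd b) (Fin.castAdd b) =
        Matrix.of fun i j => P (x (g (Fin.castAdd b i))) *
          Matrix.vandermonde (x ∘ ⇑g ∘ Fin.castAdd b) i j := by
      ext i j
      have hj : ((Fin.castAdd b j : Fin (a + b)) : ℕ) < a := j.2
      simp only [Matrix.submatrix_apply, Function.comp_apply, hN, Matrix.of_apply,
        Matrix.vandermonde_apply, Fin.coe_castAdd]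
      rw [if_pos j.2]
      ring
    rw [he, Matrix.det_mul_column]
  have detB : ∀ g : Equiv.Perm (Fin (a + b)),
      N.submatrix (⇑g ∘ Fin.natAdd a) (Fin.natAdd a) =
        Matrix.vandermonde (x ∘ ⇑g ∘ Fin.natAdd a) := by
    intro g
    ext i j
    have hj : ¬ ((Fin.natAdd a j : Fin (a + b)) : ℕ) < a := by
      simp only [Fin.coe_natAdd]; omega
    simp only [Matrix.submatrix_apply, Function.comp_apply, hN, Matrix.of_apply,
      Matrix.vandermonde_apply, Fin.coe_natAdd]
    rw [if_neg (by omega), Nat.add_sub_cancel_left]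
  have step1 : ∀ g : Equiv.Perm (Fin (a + b)),
      (∏ p ∈ pf a, (x (g (Fin.castAdd b p.1)) - x (g (Fin.castAdd b p.2)))) *
      (∏ p ∈ pf b, (x (g (Fin.natAdd a p.1)) - x (g (Fin.natAdd a p.2)))) *
      (∏ i : Fin a, ∏ j : Fin b, (x (g (Fin.castAdd b i)) - t j)) =
      (-1 : K) ^ ((pf a).card + (pf b).card) *
        (Matrix.det (N.submatrix (⇑g ∘ Fin.castAdd b) (Fin.castAdd b)) *
         Matrix.det (N.submatrix (⇑g ∘ Fin.natAdd a) (Fin.natAdd a))) := by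
    intro g
    rw [detA g, detB g]
    have e1 := prod_sub_eq (K := K) (x ∘ ⇑g ∘ Fin.castAdd b)
    have e2 := prod_sub_eq (K := K) (x ∘ ⇑g ∘ Fin.natAdd a)
    simp only [Function.comp_apply] at e1 e2
    rw [e1, e2, pow_add]
    have e3 : ∏ i : Fin a, ∏ j : Fin b, (x (g (Fin.castAdd b i)) - t j) =
        ∏ i : Fin a, P (x (g (Fin.castAdd b i))) := rfl
    rw [e3]
    ring
  -- Step 2
  have merge : ∀ (g : Equiv.Perm (Fin (a + b))) (q : Equiv.Perm (Fin a) × Equiv.Perm (Fin b)),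
      (∏ i : Fin a, N (g (Fin.castAdd b (q.1 i))) (Fin.castAdd b i)) *
      (∏ j : Fin b, N (g (Fin.natAdd a (q.2 j))) (Fin.natAdd a j)) =
      ∏ r : Fin (a + b), N ((g * blockPerm a b q) r) r := by
    intro g q
    rw [← Equiv.prod_comp finSumFinEquiv (fun r => N ((g * blockPerm a b q) r) r),
      Fintype.prod_sum_type]
    congr 1
    · refine Finset.prod_congr rfl fun i _ => ?_
      rw [finSumFinEquiv_apply_left, Equiv.Perm.mul_apply, blockPerm_castAdd]
    · refine Finset.prod_congr rfl fun j _ => ?_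
      rw [finSumFinEquiv_apply_right, Equiv.Perm.mul_apply, blockPerm_natAdd]
  have step2 : ∑ g : Equiv.Perm (Fin (a + b)), ((Equiv.Perm.sign g : ℤ) : K) *
      (Matrix.det (N.submatrix (⇑g ∘ Fin.castAdd b) (Fin.castAdd b)) *
       Matrix.det (N.submatrix (⇑g ∘ Fin.natAdd a) (Fin.natAdd a))) =
      ((a.factorial * b.factorial : ℕ) : K) * Matrix.det N := by
    have expand : ∀ g : Equiv.Perm (Fin (a + b)), ((Equiv.Perm.sign g : ℤ) : K) *
        (Matrix.det (N.submatrix (⇑g ∘ Fin.castAdd b) (Fin.castAdd b)) *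
         Matrix.det (N.submatrix (⇑g ∘ Fin.natAdd a) (Fin.natAdd a))) =
        ∑ q : Equiv.Perm (Fin a) × Equiv.Perm (Fin b),
          ((Equiv.Perm.sign (g * blockPerm a b q) : ℤ) : K) *
            ∏ r : Fin (a + b), N ((g * blockPerm a b q) r) r := by
      intro g
      rw [Matrix.det_apply', Matrix.det_apply', Finset.sum_mul_sum]
      simp only [Finset.mul_sum]
      rw [← Fintype.sum_prod_type']
      refine Finset.sum_congr rfl fun q _ => ?_
      rw [← merge g q]
      simp only [Matrix.submatrix_apply, Function.comp_apply]
      have hs : ((Equiv.Perm.sign (g * blockPerm a b q) : ℤ) : K) =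
          ((Equiv.Perm.sign g : ℤ) : K) *
            (((Equiv.Perm.sign q.1 : ℤ) : K) * ((Equiv.Perm.sign q.2 : ℤ) : K)) := by
        rw [map_mul, sign_blockPerm]
        push_cast [Units.val_mul]
        ring
      rw [hs]
      ring
    rw [Finset.sum_congr rfl fun g _ => expand g, Finset.sum_comm]
    have inner : ∀ q : Equiv.Perm (Fin a) × Equiv.Perm (Fin b),
        ∑ g : Equiv.Perm (Fin (a + b)),
          ((Equiv.Perm.sign (g * blockPerm a b q) : ℤ) : K) *
            ∏ r : Fin (a + b), N ((g * blockPerm a b q) r) r = Matrix.det N := by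
      intro q
      rw [Matrix.det_apply']
      exact Equiv.sum_comp (Equiv.mulRight (blockPerm a b q))
        (fun h => ((Equiv.Perm.sign h : ℤ) : K) * ∏ r : Fin (a + b), N (h r) r)
    rw [Finset.sum_congr rfl fun q _ => inner q, Finset.sum_const, Finset.card_univ,
      Fintype.card_prod, Fintype.card_perm, Fintype.card_perm, Fintype.card_fin,
      Fintype.card_fin, nsmul_eq_mul]
  -- Step 3
  have step3 : Matrix.det N = (-1 : K) ^ (a * b) * Matrix.det (Matrix.vandermonde x) := by
    set qp : Polynomial K := ∏ j : Fin b, (Polynomial.X - Polynomial.C (t j)) with hq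
    have hqm : qp.Monic :=
      Polynomial.monic_prod_of_monic _ _ (fun j _ => Polynomial.monic_X_sub_C (t j))
    have hqd : qp.natDegree = b := by
      rw [hq, Polynomial.natDegree_prod_of_monic _ _ (fun j _ => Polynomial.monic_X_sub_C (t j))]
      simp
    have hPq : ∀ y : K, P y = Polynomial.eval y qp := by
      intro y
      rw [hP, hq]
      simp [Polynomial.eval_prod]
    have hmon : ∀ c : ℕ, (qp * Polynomial.X ^ c).Monic := fun c =>
      hqm.mul (Polynomial.monic_X_pow c)
    have hdeg : ∀ c : ℕ, (qp * Polynomial.X ^ c).natDegree = b + c := fun c => by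
      rw [hqm.natDegree_mul (Polynomial.monic_X_pow c), hqd, Polynomial.natDegree_X_pow]
    set Cm : Matrix (Fin (a + b)) (Fin (a + b)) K := Matrix.of fun k c =>
      if (c : ℕ) < a then (qp * Polynomial.X ^ (c : ℕ)).coeff (k : ℕ)
      else if (k : ℕ) = (c : ℕ) - a then 1 else 0 with hCm
    have hNC : N = Matrix.vandermonde x * Cm := by
      ext r c
      rw [Matrix.mul_apply]
      by_cases hc : (c : ℕ) < a
      · have he : ∀ k : Fin (a + b), Matrix.vandermonde x r k * Cm k c =
            (qp * Polynomial.X ^ (c : ℕ)).coeff (k : ℕ) * x r ^ (k : ℕ) := by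
          intro k
          simp only [Matrix.vandermonde_apply, hCm, Matrix.of_apply, if_pos hc]
          ring
        have hsum : ∑ k : Fin (a + b), (qp * Polynomial.X ^ (c : ℕ)).coeff (k : ℕ) * x r ^ (k : ℕ)
            = Polynomial.eval (x r) (qp * Polynomial.X ^ (c : ℕ)) := by
          rw [Polynomial.eval_eq_sum_range' (n := a + b) (by rw [hdeg]; omega) (x r)]
          exact Fin.sum_univ_eq_sum_range
            (fun k => (qp * Polynomial.X ^ (c : ℕ)).coeff k * x r ^ k) (a + b)
        rw [Finset.sum_congr rfl fun k _ => he k, hsum,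
          Polynomial.eval_mul, Polynomial.eval_pow, Polynomial.eval_X, ← hPq]
        simp only [hN, Matrix.of_apply, if_pos hc]
        ring
      · have hca : (c : ℕ) - a < a + b := by have := c.2; omega
        have he : ∀ k : Fin (a + b), Matrix.vandermonde x r k * Cm k c =
            if k = (⟨(c : ℕ) - a, hca⟩ : Fin (a + b)) then x r ^ ((c : ℕ) - a) else 0 := by
          intro k
          simp only [Matrix.vandermonde_apply, hCm, Matrix.of_apply, if_neg hc]
          by_cases hk : (k : ℕ) = (c : ℕ) - a
          · rw [if_pos hk, if_pos (Fin.ext hk), mul_one, hk]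
          · rw [if_neg hk, if_neg (fun hh => hk (by rw [hh])), mul_zero]
        rw [Finset.sum_congr rfl fun k _ => he k, Finset.sum_ite_eq' Finset.univ
          (⟨(c : ℕ) - a, hca⟩ : Fin (a + b)) (fun _ => x r ^ ((c : ℕ) - a)),
          if_pos (Finset.mem_univ _)]
        simp only [hN, Matrix.of_apply, if_neg hc]
    obtain ⟨M, hM⟩ : ∃ M, a + b = M + 1 := ⟨a + b - 1, by omega⟩
    set ρ : Equiv.Perm (Fin (a + b)) :=
      (Equiv.permCongr (finCongr hM.symm)) ((finRotate (M + 1)) ^ a) with hρ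
    have hρval : ∀ j : Fin (a + b), ((ρ j) : ℕ) = ((j : ℕ) + a) % (a + b) := by
      intro j
      rw [hρ]
      simp only [Equiv.permCongr_apply, finCongr_symm, finCongr_apply, Fin.coe_cast]
      rw [rot_pow_val]
      simp [← hM]
    have hmod : ∀ n : ℕ, a + b ≤ n → n < 2 * (a + b) → n % (a + b) = n - (a + b) := by
      intro n h1 h2
      rw [Nat.mod_eq_sub_mod h1, Nat.mod_eq_of_lt (by omega)]
    have hρlo : ∀ j : Fin (a + b), (j : ℕ) < b → ((ρ j) : ℕ) = a + (j : ℕ) := by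
      intro j hj
      rw [hρval, Nat.mod_eq_of_lt (by omega)]
      omega
    have hρhi : ∀ j : Fin (a + b), b ≤ (j : ℕ) → ((ρ j) : ℕ) = (j : ℕ) - b := by
      intro j hj
      have := j.2
      rw [hρval, hmod _ (by omega) (by omega)]
      omega
    have htri : (Cm.submatrix id ⇑ρ).BlockTriangular id := by
      intro u v huv
      simp only [Matrix.submatrix_apply, id_eq] at huv ⊢
      by_cases hv : (v : ℕ) < b
      · have h1 : ¬ ((ρ v : Fin (a + b)) : ℕ) < a := by rw [hρlo v hv]; omega
        simp only [hCm, Matrix.of_apply, if_neg h1]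
        rw [if_neg]
        rw [hρlo v hv]
        have : (v : ℕ) < (u : ℕ) := huv
        omega
      · push_neg at hv
        have h1 : ((ρ v : Fin (a + b)) : ℕ) < a := by
          rw [hρhi v hv]
          have := v.2
          omega
        simp only [hCm, Matrix.of_apply, if_pos h1]
        apply Polynomial.coeff_eq_zero_of_natDegree_lt
        rw [hdeg, hρhi v hv]
        have : (v : ℕ) < (u : ℕ) := huv
        omega
    have hdiag : ∀ j : Fin (a + b), (Cm.submatrix id ⇑ρ) j j = 1 := by
      intro j
      simp only [Matrix.submatrix_apply, id_eq]
      by_cases hj : (j : ℕ) < b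
      · have h1 : ¬ ((ρ j : Fin (a + b)) : ℕ) < a := by rw [hρlo j hj]; omega
        simp only [hCm, Matrix.of_apply, if_neg h1]
        rw [if_pos]
        rw [hρlo j hj]
        omega
      · push_neg at hj
        have h1 : ((ρ j : Fin (a + b)) : ℕ) < a := by
          rw [hρhi j hj]
          have := j.2
          omega
        simp only [hCm, Matrix.of_apply, if_pos h1]
        have h2 : (j : ℕ) = (qp * Polynomial.X ^ ((ρ j : Fin (a + b)) : ℕ)).natDegree := by
          rw [hdeg, hρhi j hj]
          omega
        rw [h2]
        exact (hmon _).coeff_natDegree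
    have hdet1 : (Cm.submatrix id ⇑ρ).det = 1 := by
      rw [Matrix.det_of_upperTriangular htri]
      exact Finset.prod_eq_one fun j _ => hdiag j
    have h2 := Matrix.det_permute' ρ Cm
    rw [hdet1] at h2
    have hsρ : ((Equiv.Perm.sign ρ : ℤ) : K) = (-1 : K) ^ (a * b) := by
      have hsgn : Equiv.Perm.sign ρ = (-1 : ℤˣ) ^ (M * a) := by
        rw [hρ, Equiv.Perm.sign_permCongr, map_pow, sign_finRotate, ← pow_mul, Nat.add_sub_cancel]
      rw [hsgn]
      obtain ⟨a', rfl⟩ : ∃ a', a = a' + 1 := ⟨a - 1, by omega⟩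
      have hMe : M = a' + b := by omega
      have hcast : (((-1 : ℤˣ) ^ (M * (a' + 1)) : ℤˣ) : ℤ) = (-1 : ℤ) ^ (M * (a' + 1)) := by
        rw [Units.val_pow_eq_pow_val]
        norm_num
      rw [hcast]
      push_cast
      rw [hMe, show (a' + b) * (a' + 1) = a' * (a' + 1) + (a' + 1) * b by ring, pow_add,
        (Nat.even_mul_succ_self a').neg_one_pow, one_mul]
    have hdetCm : Cm.det = (-1 : K) ^ (a * b) := by
      have hss : ((Equiv.Perm.sign ρ : ℤ) : K) * ((Equiv.Perm.sign ρ : ℤ) : K) = 1 := by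
        rcases Int.units_eq_one_or (Equiv.Perm.sign ρ) with h | h <;> rw [h] <;> norm_num
      have h3 : ((Equiv.Perm.sign ρ : ℤ) : K) * Cm.det = 1 := by
        rw [← h2]
      calc Cm.det = (((Equiv.Perm.sign ρ : ℤ) : K) * ((Equiv.Perm.sign ρ : ℤ) : K)) * Cm.det := by
            rw [hss, one_mul]
        _ = ((Equiv.Perm.sign ρ : ℤ) : K) * (((Equiv.Perm.sign ρ : ℤ) : K) * Cm.det) := by ring
        _ = ((Equiv.Perm.sign ρ : ℤ) : K) := by rw [h3, mul_one]
        _ = (-1 : K) ^ (a * b) := hsρ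
    rw [hNC, Matrix.det_mul, hdetCm]
    ring
  -- Final assembly
  calc ∑ g : Equiv.Perm (Fin (a + b)), ((Equiv.Perm.sign g : ℤ) : K) *
      ((∏ p ∈ pf a, (x (g (Fin.castAdd b p.1)) - x (g (Fin.castAdd b p.2)))) *
       (∏ p ∈ pf b, (x (g (Fin.natAdd a p.1)) - x (g (Fin.natAdd a p.2)))) *
       ∏ i : Fin a, ∏ j : Fin b, (x (g (Fin.castAdd b i)) - t j))
      = ∑ g : Equiv.Perm (Fin (a + b)), (-1 : K) ^ ((pf a).card + (pf b).card) *
          (((Equiv.Perm.sign g : ℤ) : K) *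
          (Matrix.det (N.submatrix (⇑g ∘ Fin.castAdd b) (Fin.castAdd b)) *
           Matrix.det (N.submatrix (⇑g ∘ Fin.natAdd a) (Fin.natAdd a)))) := by
        refine Finset.sum_congr rfl fun g _ => ?_
        rw [step1 g]
        ring
    _ = (-1 : K) ^ ((pf a).card + (pf b).card) *
          ∑ g : Equiv.Perm (Fin (a + b)), ((Equiv.Perm.sign g : ℤ) : K) *
          (Matrix.det (N.submatrix (⇑g ∘ Fin.castAdd b) (Fin.castAdd b)) *
           Matrix.det (N.submatrix (⇑g ∘ Fin.natAdd a) (Fin.natAdd a))) := by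
        rw [Finset.mul_sum]
    _ = (-1 : K) ^ ((pf a).card + (pf b).card) *
          (((a.factorial * b.factorial : ℕ) : K) * Matrix.det N) := by rw [step2]
    _ = ((a.factorial * b.factorial : ℕ) : K) *
          ((-1 : K) ^ ((pf a).card + (pf b).card) * ((-1 : K) ^ (a * b) *
            Matrix.det (Matrix.vandermonde x))) := by rw [step3]; ring
    _ = ((a.factorial * b.factorial : ℕ) : K) * ∏ p ∈ pf (a + b), (x p.1 - x p.2) := by
        rw [prod_sub_eq x, ← card_pf_add a b]
        rw [pow_add, pow_add]
        ring

end MainVal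

lemma main_poly {K : Type*} [Field K] [CharZero K] (a b : ℕ) (ha : 1 ≤ a) :
    ∑ g : Equiv.Perm (Fin (a + b)),
        MvPolynomial.C ((Equiv.Perm.sign (extM a b g) : ℤ) : K) *
          rename (fun i => extM a b g i) (Qstar a b K) =
      MvPolynomial.C ((a.factorial * b.factorial : ℕ) : K) *
        vdm (a + 2 * b) K (setA a b ∪ setB1 a b) := by
  apply MvPolynomial.funext
  intro z
  rw [map_sum]
  have hterm : ∀ g : Equiv.Perm (Fin (a + b)),
      eval z (MvPolynomial.C ((Equiv.Perm.sign (extM a b g) : ℤ) : K) *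
        rename (fun i => extM a b g i) (Qstar a b K)) =
      ((Equiv.Perm.sign g : ℤ) : K) *
        ((∏ p ∈ pf a, ((z ∘ iM a b) (g (Fin.castAdd b p.1)) -
            (z ∘ iM a b) (g (Fin.castAdd b p.2)))) *
         (∏ p ∈ pf b, ((z ∘ iM a b) (g (Fin.natAdd a p.1)) -
            (z ∘ iM a b) (g (Fin.natAdd a p.2)))) *
         ∏ i : Fin a, ∏ j : Fin b, ((z ∘ iM a b) (g (Fin.castAdd b i)) - (z ∘ iC a b) j)) := by
    intro g
    rw [map_mul, eval_C, eval_rename, eval_Qstar, sign_extM]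
    have hA : ∀ i : Fin a, extM a b g (iA a b i) = iM a b (g (Fin.castAdd b i)) := fun i => by
      rw [iA_eq, extM_iM]
    have hB : ∀ j : Fin b, extM a b g (iB a b j) = iM a b (g (Fin.natAdd a j)) := fun j => by
      rw [iB_eq, extM_iM]
    have hC : ∀ j : Fin b, extM a b g (iC a b j) = iC a b j := fun j =>
      extM_fix a b g _ (by simp only [iC_val]; omega)
    simp only [Function.comp_apply, hA, hB, hC]
  rw [Finset.sum_congr rfl fun g _ => hterm g, main_val a b ha (z ∘ iM a b) (z ∘ iC a b),
    map_mul, eval_C, eval_vdm_union]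
  simp only [Function.comp_apply]

lemma keyTT {K : Type*} [Field K] [CharZero K] (a b : ℕ)
    (σ τ : Equiv.Perm (Fin (a + 2 * b))) (hτ : inH a b τ) :
    MvPolynomial.C ((Equiv.Perm.sign (σ * τ) : ℤ) : K) *
        rename (⇑(σ * τ)) (Qstar a b K) =
      MvPolynomial.C ((Equiv.Perm.sign σ : ℤ) : K) * rename (⇑σ) (Qstar a b K) := by
  have hcoe : ⇑(σ * τ) = ⇑σ ∘ ⇑τ := rfl
  have hs : ((Equiv.Perm.sign (σ * τ) : ℤ) : K) =
      ((Equiv.Perm.sign σ : ℤ) : K) * ((Equiv.Perm.sign τ : ℤ) : K) := by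
    rw [map_mul]
    push_cast [Units.val_mul]
    ring
  rw [hcoe, ← MvPolynomial.rename_rename, hs, map_mul]
  have : (rename (⇑σ)) (MvPolynomial.C ((Equiv.Perm.sign τ : ℤ) : K) *
      rename (⇑τ) (Qstar a b K)) = rename (⇑σ) (Qstar a b K) := by
    rw [part1 a b τ hτ]
  rw [map_mul, MvPolynomial.rename_C] at this
  calc MvPolynomial.C ((Equiv.Perm.sign σ : ℤ) : K) * MvPolynomial.C ((Equiv.Perm.sign τ : ℤ) : K) *
        rename (⇑σ) (rename (⇑τ) (Qstar a b K))
      = MvPolynomial.C ((Equiv.Perm.sign σ : ℤ) : K) *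
          (MvPolynomial.C ((Equiv.Perm.sign τ : ℤ) : K) *
            rename (⇑σ) (rename (⇑τ) (Qstar a b K))) := by ring
    _ = MvPolynomial.C ((Equiv.Perm.sign σ : ℤ) : K) * rename (⇑σ) (Qstar a b K) := by rw [this]

end SpechtBn

open SpechtBn in
/-- `Q*` is anti-invariant under `H`, and an `H`-coset-representative signed sum of
`Q*` over `G` equals `Δ_{A∪B₁}`. -/
theorem signed_coset_sum_eq_vandermonde {K : Type*} [Field K] [CharZero K]
    (a b : ℕ) (ha : 1 ≤ a) :
    (∀ τ : Equiv.Perm (Fin (a + 2 * b)), inH a b τ →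
      MvPolynomial.C ((Equiv.Perm.sign τ : ℤ) : K) *
          MvPolynomial.rename (fun i => τ i) (Qstar a b K) = Qstar a b K) ∧
    (∀ R : Finset (Equiv.Perm (Fin (a + 2 * b))),
      (∀ σ ∈ R, inG a b σ) →
      (∀ g : Equiv.Perm (Fin (a + 2 * b)), inG a b g →
          ∃! σ, σ ∈ R ∧ inH a b (σ⁻¹ * g)) →
      ∑ σ ∈ R, MvPolynomial.C ((Equiv.Perm.sign σ : ℤ) : K) *
          MvPolynomial.rename (fun i => σ i) (Qstar a b K)
        = vdm (a + 2 * b) K (setA a b ∪ setB1 a b)) := by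
  classical
  constructor
  · intro τ hτ
    exact SpechtBn.part1 a b τ hτ
  · intro R hRG hcoset
    set T : Equiv.Perm (Fin (a + 2 * b)) → MvPolynomial (Fin (a + 2 * b)) K :=
      fun σ => MvPolynomial.C ((Equiv.Perm.sign σ : ℤ) : K) *
        MvPolynomial.rename (fun i => σ i) (Qstar a b K) with hT
    set Hset : Finset (Equiv.Perm (Fin (a + 2 * b))) := Finset.univ.image (Phi a b) with hHset
    have hHmem : ∀ τ, τ ∈ Hset ↔ inH a b τ := by
      intro τ
      rw [hHset, Finset.mem_image]
      constructor
      · rintro ⟨q, -, rfl⟩; exact Phi_inH a b q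
      · intro h; obtain ⟨q, rfl⟩ := Phi_surj a b τ h; exact ⟨q, Finset.mem_univ _, rfl⟩
    have hcardH : Hset.card = a.factorial * b.factorial := by
      rw [hHset, Finset.card_image_of_injective _ (Phi_inj a b), Finset.card_univ,
        Fintype.card_prod, Fintype.card_perm, Fintype.card_perm, Fintype.card_fin,
        Fintype.card_fin]
    set Gset : Finset (Equiv.Perm (Fin (a + 2 * b))) := Finset.univ.image (extM a b) with hGset
    have hGmem : ∀ σ, σ ∈ Gset ↔ inG a b σ := by
      intro σ
      rw [hGset, Finset.mem_image]
      constructor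
      · rintro ⟨g, -, rfl⟩; exact inG_extM a b g
      · intro h; obtain ⟨g, rfl⟩ := extM_surj a b σ h; exact ⟨g, Finset.mem_univ _, rfl⟩
    have h1 : ∑ g : Equiv.Perm (Fin (a + b)), T (extM a b g) = ∑ σ ∈ Gset, T σ :=
      (Finset.sum_image (fun x _ y _ h => extM_inj a b h)).symm
    have hmapsto : ∀ pq ∈ R ×ˢ Hset, pq.1 * pq.2 ∈ Gset := by
      intro pq hpq
      rw [Finset.mem_product] at hpq
      rw [hGmem]
      intro i hi
      rw [Equiv.Perm.mul_apply, ((hHmem pq.2).1 hpq.2).1 i hi, hRG pq.1 hpq.1 i hi]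
    have h2 : ∑ σ ∈ Gset, T σ = ∑ pq ∈ R ×ˢ Hset, T (pq.1 * pq.2) := by
      refine (Finset.sum_bij (fun pq _ => pq.1 * pq.2) hmapsto ?_ ?_ (fun pq _ => rfl)).symm
      · intro pq hpq pq' hpq' heq0
        have heq : pq.1 * pq.2 = pq'.1 * pq'.2 := heq0
        have hg : inG a b (pq.1 * pq.2) := (hGmem _).1 (hmapsto pq hpq)
        rw [Finset.mem_product] at hpq hpq'
        obtain ⟨σu, hσu, huniq⟩ := hcoset (pq.1 * pq.2) hg
        have e1 : pq.1 = σu := huniq pq.1 ⟨hpq.1, by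
          rw [inv_mul_cancel_left]; exact (hHmem _).1 hpq.2⟩
        have e2 : pq'.1 = σu := huniq pq'.1 ⟨hpq'.1, by
          rw [heq, inv_mul_cancel_left]; exact (hHmem _).1 hpq'.2⟩
        have e3 : pq.1 = pq'.1 := e1.trans e2.symm
        have e4 : pq.2 = pq'.2 := by
          apply mul_left_cancel (a := pq.1)
          rw [heq, e3]
        exact Prod.ext e3 e4
      · intro g hg
        obtain ⟨σu, ⟨hσR, hσH⟩, -⟩ := hcoset g ((hGmem g).1 hg)
        exact ⟨(σu, σu⁻¹ * g), Finset.mem_product.2 ⟨hσR, (hHmem _).2 hσH⟩,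
          show σu * (σu⁻¹ * g) = g from mul_inv_cancel_left σu g⟩
    have h3 : ∑ pq ∈ R ×ˢ Hset, T (pq.1 * pq.2) =
        ∑ σ ∈ R, (a.factorial * b.factorial) • T σ := by
      rw [Finset.sum_product]
      refine Finset.sum_congr rfl fun σ _ => ?_
      rw [Finset.sum_congr rfl fun τ hτ => keyTT a b σ τ ((hHmem τ).1 hτ), Finset.sum_const,
        hcardH]
    have h4 := main_poly (K := K) a b ha
    have h5 : ∑ σ ∈ R, (a.factorial * b.factorial) • T σ =
        MvPolynomial.C (((a.factorial * b.factorial : ℕ)) : K) * ∑ σ ∈ R, T σ := by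
      rw [← Finset.smul_sum, nsmul_eq_mul,
        ← map_natCast (MvPolynomial.C : K →+* MvPolynomial (Fin (a + 2 * b)) K)
          (a.factorial * b.factorial)]
    have hchain : MvPolynomial.C (((a.factorial * b.factorial : ℕ)) : K) * ∑ σ ∈ R, T σ =
        MvPolynomial.C (((a.factorial * b.factorial : ℕ)) : K) *
          vdm (a + 2 * b) K (setA a b ∪ setB1 a b) := by
      rw [← h5, ← h3, ← h2, ← h1, h4]
    have hne : (MvPolynomial.C (((a.factorial * b.factorial : ℕ)) : K) :
        MvPolynomial (Fin (a + 2 * b)) K) ≠ 0 := by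
      rw [Ne, MvPolynomial.C_eq_zero]
      exact_mod_cast Nat.mul_ne_zero (Nat.factorial_ne_zero a) (Nat.factorial_ne_zero b)
    exact mul_left_cancel₀ hne hchain
end
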